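/- arXiv:1904.08086 — 7 statements merged into one kernel-verified Lean document; each statement's English description precedes it below -/
import Mathlib

section
/- Let M be a closed topological n-manifold and let f be a topological flow on M whose chain recurrent set R_f is finite and consists of topologically hyperbolic fixed points p_1, …, p_k. Then M = ⋃_{i=1}^k W^u_{p_i} = ⋃_{i=1}^k W^s_{p_i}; that is, for every point y ∈ M there exist fixed points p_i and p_j such that f(t,y) → p_i as t → +∞ and f(−t,y) → p_j as t → +∞. -/
open Filter Topology Set

/-- The model linear flow `a^t_λ` on `ℝ^n`. -/
noncomputable def modelFlow (n lam : ℕ) (t : ℝ) (x : Fin n → ℝ) : Fin n → ℝ :=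
  fun i => if (i : ℕ) < lam then (2 : ℝ) ^ t * x i else (2 : ℝ) ^ (-t) * x i

/-- An `ε`-chain of length `T` from `x` to `y` for the flow `f`. -/
def IsEpsChain {M : Type*} [MetricSpace M] (f : ℝ → M → M) (ε T : ℝ) (x y : M) : Prop :=
  ∃ (m : ℕ) (xs : ℕ → M) (ts : ℕ → ℝ), 0 < m ∧ xs 0 = x ∧ xs m = y ∧
    (∀ i ∈ Finset.Icc 1 m, 1 ≤ ts i ∧ dist (f (ts i) (xs (i - 1))) (xs i) < ε) ∧
    ∑ i ∈ Finset.Icc 1 m, ts i = T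

/-- A point is chain recurrent if for every `ε > 0` there is an `ε`-chain of some
length `T` from the point to itself. -/
def IsChainRecurrent {M : Type*} [MetricSpace M] (f : ℝ → M → M) (x : M) : Prop :=
  ∀ ε > 0, ∃ T > 0, IsEpsChain f ε T x x

/-- The stable manifold `W^s_p`. -/
def stableSet {M : Type*} [TopologicalSpace M] (f : ℝ → M → M) (p : M) : Set M :=
  {y | Tendsto (fun t : ℝ => f t y) atTop (nhds p)}

/-- The unstable manifold `W^u_p`. -/
def unstableSet {M : Type*} [TopologicalSpace M] (f : ℝ → M → M) (p : M) : Set M :=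
  {y | Tendsto (fun t : ℝ => f (-t) y) atTop (nhds p)}

/-- `p` is a topologically hyperbolic fixed point of index `lam` of the flow `f`. -/
def IsTopHyperbolicFixedPt {M : Type*} [TopologicalSpace M] (n : ℕ) (f : ℝ → M → M)
    (p : M) (lam : ℕ) : Prop :=
  lam ≤ n ∧ (∀ t : ℝ, f t p = p) ∧
  ∃ (U : Set M) (_ : IsOpen U) (hp : p ∈ U) (h : U ≃ₜ (Fin n → ℝ)),
    h ⟨p, hp⟩ = 0 ∧
    ∀ (t : ℝ) (y : M) (hy : y ∈ U) (hfy : ∀ s ∈ Set.uIcc (0 : ℝ) t, f s y ∈ U),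
      (h ⟨f t y, hfy t Set.right_mem_uIcc⟩ : Fin n → ℝ) = modelFlow n lam t (h ⟨y, hy⟩)

/-- `p` is a regular point of `φ` (in the sense of continuous Morse theory). -/
def IsRegularPoint {M : Type*} [TopologicalSpace M] (n : ℕ) (φ : M → ℝ) (p : M) : Prop :=
  ∃ (V : Set M) (_ : IsOpen V) (hp : p ∈ V) (ψ : V ≃ₜ (Fin n → ℝ)) (j : Fin n),
    (j : ℕ) + 1 = n ∧ ψ ⟨p, hp⟩ = 0 ∧ ∀ y : V, φ y = φ p + ψ y j

/-- `p` is a non-degenerate critical point of `φ` of index `ν`. -/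
def IsNondegenerateCriticalPoint {M : Type*} [TopologicalSpace M] (n : ℕ) (φ : M → ℝ)
    (p : M) (ν : ℕ) : Prop :=
  ν ≤ n ∧ ¬ IsRegularPoint n φ p ∧
  ∃ (V : Set M) (_ : IsOpen V) (hp : p ∈ V) (ψ : V ≃ₜ (Fin n → ℝ)),
    ψ ⟨p, hp⟩ = 0 ∧
    ∀ y : V, φ y = φ p
      - ∑ i ∈ Finset.univ.filter (fun i : Fin n => (i : ℕ) < ν), (ψ y i) ^ 2
      + ∑ i ∈ Finset.univ.filter (fun i : Fin n => ν ≤ (i : ℕ)), (ψ y i) ^ 2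

/-- `M` is locally Euclidean of dimension `n` (every point has a neighborhood
homeomorphic to `ℝ^n`). -/
def LocallyEuclidean (n : ℕ) (M : Type*) [TopologicalSpace M] : Prop :=
  ∀ p : M, ∃ U : Set M, IsOpen U ∧ p ∈ U ∧ Nonempty (U ≃ₜ (Fin n → ℝ))

section AuxChainRec

variable {M : Type*} [MetricSpace M]

/-- `q` is a limit point of the curve `u` at `+∞`. -/
def LimPt (u : ℝ → M) (q : M) : Prop :=
  ∀ δ > 0, ∀ T : ℝ, ∃ t ≥ T, dist (u t) q < δ

lemma limPt_nonempty [CompactSpace M] (u : ℝ → M) : ∃ q, LimPt u q := by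
  obtain ⟨a, -, φ, hφ, hconv⟩ :=
    isCompact_univ.tendsto_subseq (x := fun n : ℕ => u n) (fun n => Set.mem_univ _)
  refine ⟨a, fun δ hδ T => ?_⟩
  obtain ⟨N, hN⟩ := Metric.tendsto_atTop.mp hconv δ hδ
  set n := max N ⌈T⌉₊
  refine ⟨(φ n : ℝ), ?_, hN n (le_max_left _ _)⟩
  calc T ≤ (⌈T⌉₊ : ℝ) := Nat.le_ceil T
    _ ≤ (n : ℝ) := by exact_mod_cast Nat.cast_le.mpr (le_max_right _ _)
    _ ≤ (φ n : ℝ) := by exact_mod_cast hφ.le_apply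

lemma tail_in_open [CompactSpace M] (u : ℝ → M) (hu : Continuous u) (V : Set M)
    (hV : IsOpen V) (hL : ∀ q, LimPt u q → q ∈ V) : ∃ T : ℝ, ∀ t ≥ T, u t ∈ V := by
  by_contra h
  push_neg at h
  choose t ht hv using h
  obtain ⟨a, haC, φ, hφ, hconv⟩ :=
    (hV.isClosed_compl.isCompact).tendsto_subseq (x := fun n : ℕ => u (t n)) (fun n => hv n)
  refine haC (hL a ?_)
  intro δ hδ T
  obtain ⟨N, hN⟩ := Metric.tendsto_atTop.mp hconv δ hδ
  set n := max N ⌈T⌉₊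
  refine ⟨t (φ n), ?_, hN n (le_max_left _ _)⟩
  calc T ≤ (⌈T⌉₊ : ℝ) := Nat.le_ceil T
    _ ≤ (n : ℝ) := by exact_mod_cast Nat.cast_le.mpr (le_max_right _ _)
    _ ≤ (φ n : ℝ) := by exact_mod_cast hφ.le_apply
    _ ≤ t (φ n) := ht (φ n)

lemma conv_of_finite [CompactSpace M] (u : ℝ → M) (hu : Continuous u) (R : Set M)
    (hRfin : R.Finite) (hLR : ∀ q, LimPt u q → q ∈ R) :
    ∃ p ∈ R, Filter.Tendsto u Filter.atTop (nhds p) := by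
  classical
  obtain ⟨q0, hq0⟩ := limPt_nonempty u
  have huniq : ∀ q, LimPt u q → q = q0 := by
    intro q hq
    by_contra hne
    set F := hRfin.toFinset with hF
    have hqF : q ∈ F := hRfin.mem_toFinset.mpr (hLR q hq)
    have hq0F : q0 ∈ F := hRfin.mem_toFinset.mpr (hLR q0 hq0)
    have hPne : (F.offDiag).Nonempty := ⟨(q, q0), Finset.mem_offDiag.mpr ⟨hqF, hq0F, hne⟩⟩
    set ε0 := F.offDiag.inf' hPne (fun ab => dist ab.1 ab.2) with hε0
    have hε0pos : 0 < ε0 := by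
      rw [hε0, Finset.lt_inf'_iff]
      rintro ⟨a, b⟩ hab
      exact dist_pos.mpr (Finset.mem_offDiag.mp hab).2.2
    set δ := ε0 / 3 with hδ
    have hδpos : 0 < δ := by positivity
    have hdist : ∀ a ∈ F, ∀ b ∈ F, a ≠ b → ε0 ≤ dist a b := by
      intro a ha b hb hab
      exact Finset.inf'_le (fun ab => dist ab.1 ab.2) (show (a, b) ∈ F.offDiag from Finset.mem_offDiag.mpr ⟨ha, hb, hab⟩)
    set V := ⋃ p ∈ F, Metric.ball p δ with hVdef
    have hVopen : IsOpen V := isOpen_biUnion fun _ _ => Metric.isOpen_ball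
    obtain ⟨T, hT⟩ := tail_in_open u hu V hVopen (fun r hr =>
      Set.mem_biUnion (hRfin.mem_toFinset.mpr (hLR r hr)) (Metric.mem_ball_self hδpos))
    obtain ⟨p0, hp0F, hup0⟩ : ∃ p ∈ F, u T ∈ Metric.ball p δ := by
      have := hT T le_rfl
      simpa [hVdef, Set.mem_iUnion] using this
    have htail : ∀ t ≥ T, u t ∈ Metric.ball p0 δ := by
      set U1 := u ⁻¹' (Metric.ball p0 δ) with hU1
      set U2 := u ⁻¹' (⋃ p ∈ F.erase p0, Metric.ball p δ) with hU2
      have h1 : IsOpen U1 := Metric.isOpen_ball.preimage hu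
      have h2 : IsOpen U2 := (isOpen_biUnion fun _ _ => Metric.isOpen_ball).preimage hu
      have hcover : Set.Ici T ⊆ U1 ∪ U2 := by
        intro t ht'
        have := hT t ht'
        simp only [hVdef, Set.mem_iUnion, exists_prop] at this
        obtain ⟨p, hpF, hball⟩ := this
        by_cases hp : p = p0
        · subst hp; exact Or.inl hball
        · exact Or.inr (Set.mem_preimage.mpr
            (Set.mem_biUnion (Finset.mem_erase.mpr ⟨hp, hpF⟩) hball))
      have hU1ne : (Set.Ici T ∩ U1).Nonempty := ⟨T, Set.self_mem_Ici, hup0⟩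
      rcases Set.eq_empty_or_nonempty (Set.Ici T ∩ U2) with hemp | hne2
      · intro t ht'
        rcases hcover ht' with h | h
        · exact h
        · have hmem : t ∈ Set.Ici T ∩ U2 := ⟨ht', h⟩
          rw [hemp] at hmem
          exact hmem.elim
      · exfalso
        obtain ⟨x, hx⟩ := isPreconnected_Ici U1 U2 h1 h2 hcover hU1ne hne2
        have hx1 : u x ∈ Metric.ball p0 δ := hx.2.1
        have hx2 := hx.2.2
        simp only [hU2, Set.mem_preimage, Set.mem_iUnion, exists_prop] at hx2
        obtain ⟨p, hpE, hball⟩ := hx2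
        obtain ⟨hpne, hpF⟩ := Finset.mem_erase.mp hpE
        have h3 : ε0 ≤ dist p p0 := hdist p hpF p0 hp0F hpne
        have h4 : dist p p0 ≤ dist p (u x) + dist (u x) p0 := dist_triangle _ _ _
        rw [dist_comm p (u x)] at h4
        have := Metric.mem_ball.mp hx1
        have := Metric.mem_ball.mp hball
        linarith
    have hd : ∀ r, LimPt u r → dist r p0 ≤ δ := by
      intro r hr
      refine le_of_forall_pos_lt_add ?_
      intro δ' hδ'
      obtain ⟨t, htT, hdr⟩ := hr δ' hδ' T
      have hb := Metric.mem_ball.mp (htail t htT)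
      calc dist r p0 ≤ dist r (u t) + dist (u t) p0 := dist_triangle _ _ _
        _ < δ' + δ := by rw [dist_comm r (u t)]; linarith
        _ = δ + δ' := by ring
    have h1 := hd q hq
    have h2 := hd q0 hq0
    have h3 : ε0 ≤ dist q q0 := hdist q hqF q0 hq0F hne
    have h4 : dist q q0 ≤ dist q p0 + dist p0 q0 := dist_triangle _ _ _
    rw [dist_comm p0 q0] at h4
    have hδε : ε0 = 3 * δ := by rw [hδ]; ring
    linarith
  refine ⟨q0, hLR q0 hq0, ?_⟩
  rw [Metric.tendsto_atTop]
  intro ε hε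
  obtain ⟨T, hT⟩ := tail_in_open u hu (Metric.ball q0 ε) Metric.isOpen_ball
    (fun r hr => by rw [huniq r hr]; exact Metric.mem_ball_self hε)
  exact ⟨T, fun t ht => Metric.mem_ball.mp (hT t ht)⟩

lemma limPt_fwd_chainrec (f : ℝ → M → M)
    (hf_cont : Continuous fun q : ℝ × M => f q.1 q.2)
    (hf_add : ∀ s t : ℝ, ∀ x, f t (f s x) = f (t + s) x)
    (y q : M) (hq : LimPt (fun t => f t y) q) : IsChainRecurrent f q := by
  intro ε hε
  have hcont1 : Continuous fun x : M => f 1 x :=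
    hf_cont.comp (continuous_const.prodMk continuous_id)
  obtain ⟨δ, hδpos, hδ⟩ := Metric.continuous_iff.mp hcont1 q ε hε
  obtain ⟨t2, ht2ge, ht2⟩ := hq δ hδpos 0
  obtain ⟨t1, ht1ge, ht1⟩ := hq ε hε (t2 + 2)
  refine ⟨t1 - t2, by linarith, 2,
    (fun i => if i = 0 then q else if i = 1 then f (1 + t2) y else q),
    (fun i => if i = 1 then 1 else t1 - (t2 + 1)), two_pos, by norm_num, by norm_num, ?_, ?_⟩
  · intro i hi
    obtain ⟨hi1, hi2⟩ := Finset.mem_Icc.mp hi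
    interval_cases i
    · refine ⟨by norm_num, ?_⟩
      simp only [if_pos rfl]
      norm_num
      have := hδ (f t2 y) ht2
      rw [hf_add t2 1 y] at this
      rw [dist_comm]
      exact this
    · refine ⟨by norm_num; linarith, ?_⟩
      norm_num
      rw [hf_add (1 + t2) (t1 - (t2 + 1)) y]
      have : t1 - (t2 + 1) + (1 + t2) = t1 := by ring
      rw [this]
      exact ht1
  · have : Finset.Icc 1 2 = ({1, 2} : Finset ℕ) := by decide
    rw [this, Finset.sum_pair (by norm_num)]
    norm_num
    ring

lemma limPt_bwd_chainrec (f : ℝ → M → M)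
    (hf_cont : Continuous fun q : ℝ × M => f q.1 q.2)
    (hf_add : ∀ s t : ℝ, ∀ x, f t (f s x) = f (t + s) x)
    (y q : M) (hq : LimPt (fun t => f (-t) y) q) : IsChainRecurrent f q := by
  intro ε hε
  have hcont1 : Continuous fun x : M => f 1 x :=
    hf_cont.comp (continuous_const.prodMk continuous_id)
  obtain ⟨δ, hδpos, hδ⟩ := Metric.continuous_iff.mp hcont1 q ε hε
  obtain ⟨t1, ht1ge, ht1⟩ := hq ε hε 0
  obtain ⟨t2, ht2ge, ht2⟩ := hq δ hδpos (t1 + 2)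
  refine ⟨t2 - t1, by linarith, 2,
    (fun i => if i = 0 then q else if i = 1 then f (1 + -t2) y else q),
    (fun i => if i = 1 then 1 else t2 - 1 - t1), two_pos, by norm_num, by norm_num, ?_, ?_⟩
  · intro i hi
    obtain ⟨hi1, hi2⟩ := Finset.mem_Icc.mp hi
    interval_cases i
    · refine ⟨by norm_num, ?_⟩
      simp only [if_pos rfl]
      norm_num
      have := hδ (f (-t2) y) ht2
      rw [hf_add (-t2) 1 y] at this
      rw [dist_comm]
      exact this
    · refine ⟨by norm_num; linarith, ?_⟩
      norm_num
      rw [hf_add (1 + -t2) (t2 - 1 - t1) y]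
      have : t2 - 1 - t1 + (1 + -t2) = -t1 := by ring
      rw [this]
      exact ht1
  · have : Finset.Icc 1 2 = ({1, 2} : Finset ℕ) := by decide
    rw [this, Finset.sum_pair (by norm_num)]
    norm_num
    ring

end AuxChainRec

/-- For a topological flow on a closed `n`-manifold whose chain recurrent
set is finite and consists of topologically hyperbolic fixed points, the manifold is the
union of the unstable manifolds and also the union of the stable manifolds of the fixed
points. -/
theorem stmt1 {M : Type*} [MetricSpace M] [CompactSpace M] (n : ℕ)
    (hM : LocallyEuclidean n M)
    (f : ℝ → M → M)
    (hf_cont : Continuous fun q : ℝ × M => f q.1 q.2)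
    (hf_zero : ∀ x, f 0 x = x)
    (hf_add : ∀ s t : ℝ, ∀ x, f t (f s x) = f (t + s) x)
    (R : Set M) (hR : R = {x | IsChainRecurrent f x}) (hRfin : R.Finite)
    (hRhyp : ∀ p ∈ R, ∃ lam : ℕ, IsTopHyperbolicFixedPt n f p lam) :
    ∀ y : M, (∃ p ∈ R, y ∈ stableSet f p) ∧ (∃ p ∈ R, y ∈ unstableSet f p) := by
  intro y
  have hcont_fwd : Continuous fun t : ℝ => f t y :=
    hf_cont.comp (continuous_id.prodMk continuous_const)
  have hcont_bwd : Continuous fun t : ℝ => f (-t) y :=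
    hf_cont.comp (continuous_neg.prodMk continuous_const)
  constructor
  · obtain ⟨p, hpR, hconv⟩ := conv_of_finite (fun t => f t y) hcont_fwd R hRfin
      (fun q hq => by rw [hR]; exact limPt_fwd_chainrec f hf_cont hf_add y q hq)
    exact ⟨p, hpR, hconv⟩
  · obtain ⟨p, hpR, hconv⟩ := conv_of_finite (fun t => f (-t) y) hcont_bwd R hRfin
      (fun q hq => by rw [hR]; exact limPt_bwd_chainrec f hf_cont hf_add y q hq)
    exact ⟨p, hpR, hconv⟩
end

section
/- Let M be a closed topological n-manifold and let f be a topological flow on M whose chain recurrent set R_f is finite and consists of topologically hyperbolic fixed points, enumerated p_1, …, p_k so that whenever W^s_{p_i} ∩ W^u_{p_j} ≠ ∅ and i ≠ j one has i < j. Then for every i, cl(W^u_{p_i}) \ (W^u_{p_i} ∪ {p_i}) ⊆ ⋃_{j=1}^{i−1} W^u_{p_j}, and cl(W^s_{p_i}) \ (W^s_{p_i} ∪ {p_i}) ⊆ ⋃_{j=i+1}^{k} W^s_{p_j}, where cl denotes topological closure in M. -/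
/-! In a chart at a hyperbolic fixed point `p` the flow is the linear saddle on `ℝⁿ`; as that
flow is complete, the chart domain is invariant and stable and unstable manifolds are coordinate
subspaces there. If an invariant set `S` accumulates at `p` but misses `W^u_p`, flowing points of
`S` close to `p` backwards until their stable component has unit size produces a point of
`cl S ∩ W^s_p` other than `p`. Finiteness of the chain recurrent set makes every orbit converge
to fixed points in both time directions and excludes homoclinic points, so this point lies on
some `W^u_{p_l'}`, and the ordering gives `l < l'`. Downward induction on `l` then shows that
`p_l ∈ cl W^u_{p_i}` forces `l ≤ i`, which yields the unstable inclusion; the stable one is the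
unstable one for the reversed flow and the reversed order. -/

open Filter Topology Set

-- Allowing any set `I` of expanding coordinates keeps time reversal (`I ↦ Iᶜ`) in the family.
noncomputable def hypFlow {n : ℕ} (I : Finset (Fin n)) : Flow ℝ (Fin n → ℝ) where
  toFun t v i := (2 : ℝ) ^ (if i ∈ I then t else -t) * v i
  cont' := continuous_pi fun i => by
    by_cases hi : i ∈ I <;> simp only [Function.uncurry, hi, if_true, if_false] <;>
      fun_prop (disch := norm_num)
  map_add' s t v := funext fun i => by
    by_cases hi : i ∈ I <;>
      simp only [hi, if_true, if_false, neg_add, Real.rpow_add two_pos] <;> ring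
  map_zero' v := funext fun i => by simp

def coordProj {n : ℕ} (I : Finset (Fin n)) (v : Fin n → ℝ) : Fin n → ℝ :=
  fun i => if i ∈ I then v i else 0

section coordProj

variable {n : ℕ} (I : Finset (Fin n))

lemma continuous_coordProj : Continuous (coordProj I) :=
  continuous_pi fun i => by
    by_cases hi : i ∈ I <;> simp only [coordProj, hi, if_true, if_false] <;> fun_prop

lemma norm_coordProj_le (v : Fin n → ℝ) : ‖coordProj I v‖ ≤ ‖v‖ :=
  (pi_norm_le_iff_of_nonneg (norm_nonneg v)).2 fun i => by
    by_cases hi : i ∈ I <;> simp [coordProj, hi, -Real.norm_eq_abs, norm_le_pi_norm]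

lemma coordProj_smul_coordProj_compl (c : ℝ) (v : Fin n → ℝ) :
    coordProj I (c • coordProj Iᶜ v) = 0 := by
  funext i
  by_cases hi : i ∈ I <;> simp [coordProj, hi]

end coordProj

namespace hypFlow

variable {n : ℕ} (I : Finset (Fin n))

lemma apply_eq (t : ℝ) (v : Fin n → ℝ) :
    hypFlow I t v = (2 : ℝ) ^ t • coordProj I v + (2 : ℝ) ^ (-t) • coordProj Iᶜ v := by
  funext i
  by_cases hi : i ∈ I <;> simp [hypFlow, coordProj, hi]

lemma compl_apply (t : ℝ) (v : Fin n → ℝ) : hypFlow Iᶜ t v = hypFlow I (-t) v := by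
  funext i
  by_cases hi : i ∈ I <;> simp [hypFlow, hi]

lemma modelFlow_eq (lam : ℕ) :
    modelFlow n lam = hypFlow (Finset.univ.filter fun i : Fin n => (i : ℕ) < lam) := by
  funext t v i
  simp [modelFlow, hypFlow]

lemma tendsto_atTop_nhds_zero_iff (v : Fin n → ℝ) :
    Tendsto (fun t => hypFlow I t v) atTop (𝓝 0) ↔ coordProj I v = 0 := by
  have hdecay : Tendsto (fun t : ℝ => (2 : ℝ) ^ (-t)) atTop (𝓝 0) :=
    (tendsto_rpow_atBot_of_base_gt_one 2 one_lt_two).comp tendsto_neg_atTop_atBot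
  simp only [tendsto_pi_nhds, funext_iff, coordProj, Pi.zero_apply]
  refine forall_congr' fun i => ?_
  by_cases hi : i ∈ I
  · simp only [hypFlow, hi, if_true]
    refine ⟨fun h => ?_, fun h => by simp [h]⟩
    have hvi : Tendsto (fun t : ℝ => v i) atTop (𝓝 0) := by
      simpa [← mul_assoc, ← Real.rpow_add two_pos] using hdecay.mul h
    exact tendsto_nhds_unique tendsto_const_nhds hvi
  · simpa [hypFlow, hi] using hdecay.mul_const (v i)

lemma apply_logb {c : ℝ} (hc : 0 < c) (v : Fin n → ℝ) :
    hypFlow I (Real.logb 2 c) v = c • coordProj I v + c⁻¹ • coordProj Iᶜ v := by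
  rw [apply_eq, Real.rpow_neg zero_le_two, Real.rpow_logb two_pos (by norm_num) hc]

theorem exists_ne_zero_mem_closure_coordProj_eq_zero {A : Set (Fin n → ℝ)}
    (hA : IsInvariant (hypFlow I) A) (h0 : 0 ∈ closure A)
    (hAu : ∀ a ∈ A, coordProj Iᶜ a ≠ 0) :
    ∃ ξ ∈ closure A, ξ ≠ 0 ∧ coordProj I ξ = 0 := by
  by_contra! hA0
  set K := {ξ | coordProj I ξ = 0} ∩ Metric.sphere 0 1
  have hK : IsCompact K :=
    (isCompact_sphere 0 1).inter_left (isClosed_eq (continuous_coordProj I) continuous_const)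
  have hKA : Disjoint K (closure A) := Set.disjoint_left.2 fun ξ ⟨hξI, hξ1⟩ hξA =>
    hA0 ξ hξA (ne_zero_of_mem_sphere (by norm_num) ⟨ξ, hξ1⟩) hξI
  obtain ⟨δ, hδ, hsep⟩ := hKA.exists_thickenings hK isClosed_closure
  obtain ⟨a, haA, ha⟩ := Metric.mem_closure_iff.1 h0 (min δ 1) (lt_min hδ one_pos)
  rw [dist_zero_left] at ha
  set c := ‖coordProj Iᶜ a‖
  have hc : 0 < c := norm_pos_iff.2 (hAu a haA)
  -- Flowing `a` backwards until its contracting part has norm one lands within `‖a‖²` of `K`.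
  have hbK : hypFlow I (Real.logb 2 c) a ∈ Metric.thickening δ K := by
    refine Metric.mem_thickening_iff.2 ⟨c⁻¹ • coordProj Iᶜ a, ⟨?_, ?_⟩, ?_⟩
    · exact coordProj_smul_coordProj_compl I _ _
    · simp [norm_smul, c, hc.ne']
    · rw [apply_logb I hc, dist_eq_norm, add_sub_cancel_right, norm_smul,
        Real.norm_of_nonneg hc.le]
      calc c * ‖coordProj I a‖ ≤ ‖a‖ * ‖a‖ := mul_le_mul (norm_coordProj_le _ a)
            (norm_coordProj_le I a) (norm_nonneg _) (norm_nonneg _)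
        _ ≤ 1 * ‖a‖ := by gcongr; exact ha.le.trans (min_le_right _ _)
        _ < δ := by linarith [min_le_left δ 1]
  exact Set.disjoint_left.1 hsep hbK
    (Metric.self_subset_thickening hδ _ (subset_closure (hA _ haA)))

end hypFlow

section Curve

variable {X : Type*} [TopologicalSpace X] {γ : ℝ → X} {x : X} {U W : Set X}

lemma MapClusterPt.not_eventually_mem_of_disjoint (hx : MapClusterPt x atTop γ)
    (hU : U ∈ 𝓝 x) (hUW : Disjoint U W) : ¬ ∀ᶠ t in atTop, γ t ∈ W := fun hW =>
  let ⟨_, htU, htW⟩ := ((mapClusterPt_iff_frequently.1 hx U hU).and_eventually hW).exists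
  hUW.notMem_of_mem_left htU htW

-- The cluster set of a curve is connected, so it cannot consist of several points.
theorem Continuous.exists_tendsto_of_mapClusterPt_mem [CompactSpace X] [T2Space X]
    (hγ : Continuous γ) {P : Set X} (hP : P.Finite)
    (hcl : ∀ z, MapClusterPt z atTop γ → z ∈ P) :
    ∃ z ∈ P, Tendsto γ atTop (𝓝 z) := by
  obtain ⟨z, hz⟩ : ∃ z, MapClusterPt z atTop γ := exists_clusterPt_of_compactSpace _
  obtain ⟨W, V, hW, hV, hzW, hPV, hWV⟩ := SeparatedNhds.of_isCompact_isCompact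
    isCompact_singleton (hP.sdiff (t := {z})).isCompact disjoint_sdiff_right
  have hWV_ev : ∀ᶠ t in atTop, γ t ∈ W ∪ V := by
    by_contra h
    obtain ⟨a, ha, hac⟩ :=
      (hW.union hV).isClosed_compl.isCompact.exists_mapClusterPt_of_frequently (not_eventually.1 h)
    by_cases haz : a = z
    · exact ha (Or.inl (hzW (haz ▸ rfl)))
    · exact ha (Or.inr (hPV ⟨hcl a hac, haz⟩))
  obtain ⟨T, hT⟩ := eventually_atTop.1 hWV_ev
  have hW_ev : ∀ᶠ t in atTop, γ t ∈ W := by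
    rcases (isPreconnected_Ici.image γ hγ.continuousOn).subset_or_subset hW hV hWV
      (image_subset_iff.2 hT) with hsub | hsub
    · exact eventually_atTop.2 ⟨T, fun t ht => hsub ⟨t, ht, rfl⟩⟩
    · exact absurd (eventually_atTop.2 ⟨T, fun t ht => hsub ⟨t, ht, rfl⟩⟩)
        (hz.not_eventually_mem_of_disjoint (hW.mem_nhds (hzW rfl)) hWV)
  refine ⟨z, hcl z hz, tendsto_nhds_of_unique_mapClusterPt fun a ha => ?_⟩
  by_contra haz
  exact ha.not_eventually_mem_of_disjoint (hV.mem_nhds (hPV ⟨hcl a ha, haz⟩)) hWV.symm hW_ev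

end Curve

section Chains

variable {M : Type*} [MetricSpace M]

lemma isEpsChain_of_three {f : ℝ → M → M} {ε t₁ t₂ t₃ : ℝ} {x₀ x₁ x₂ x₃ : M}
    (h₁ : 1 ≤ t₁) (h₂ : 1 ≤ t₂) (h₃ : 1 ≤ t₃) (d₁ : dist (f t₁ x₀) x₁ < ε)
    (d₂ : dist (f t₂ x₁) x₂ < ε) (d₃ : dist (f t₃ x₂) x₃ < ε) :
    IsEpsChain f ε (t₁ + t₂ + t₃) x₀ x₃ := by
  refine ⟨3, fun i => [x₀, x₁, x₂, x₃].getD i x₃, fun i => [0, t₁, t₂, t₃].getD i 0,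
    by norm_num, rfl, rfl, fun i hi => ?_, ?_⟩
  · obtain ⟨hi1, hi3⟩ := Finset.mem_Icc.1 hi
    interval_cases i <;> simp_all
  · simp [Finset.sum_Icc_succ_top, add_assoc]

variable {ϕ : Flow ℝ M} {x z : M}

lemma isChainRecurrent_of_forall_exists [CompactSpace M]
    (h : ∀ δ > 0, ∃ a b, a + 3 ≤ b ∧ dist (ϕ a x) z < δ ∧ dist (ϕ b x) z < δ) :
    IsChainRecurrent ϕ z := by
  intro ε hε
  obtain ⟨δ, hδ, hϕ1⟩ := Metric.uniformContinuous_iff.1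
    (CompactSpace.uniformContinuous_of_continuous (ϕ.continuous_toFun 1)) ε hε
  obtain ⟨a, b, hab, ha, hb⟩ := h (min δ ε) (lt_min hδ hε)
  refine ⟨b - a, by linarith, ?_⟩
  suffices IsEpsChain ϕ ε (1 + (b - a - 2) + 1) z z by convert this using 1; ring
  refine isEpsChain_of_three (x₁ := ϕ (a + 1) x) (x₂ := ϕ (b - 1) x) le_rfl (by linarith) le_rfl
    ?_ ?_ ?_
  · rw [dist_comm, add_comm, ϕ.map_add]
    exact hϕ1 (ha.trans_le (min_le_left _ _))
  · rw [← ϕ.map_add, show b - a - 2 + (a + 1) = b - 1 by ring, dist_self]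
    exact hε
  · rw [← ϕ.map_add, add_sub_cancel]
    exact hb.trans_le (min_le_right _ _)

lemma isChainRecurrent_of_mapClusterPt [CompactSpace M]
    (hz : MapClusterPt z atTop fun t => ϕ t x) : IsChainRecurrent ϕ z := by
  refine isChainRecurrent_of_forall_exists (x := x) fun δ hδ => ?_
  have hfreq := frequently_atTop.1 (mapClusterPt_iff_frequently.1 hz _ (Metric.ball_mem_nhds z hδ))
  obtain ⟨a, -, ha⟩ := hfreq 0
  obtain ⟨b, hab, hb⟩ := hfreq (a + 3)
  exact ⟨a, b, hab, ha, hb⟩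

lemma isChainRecurrent_of_mapClusterPt_neg [CompactSpace M]
    (hz : MapClusterPt z atTop fun t => ϕ (-t) x) : IsChainRecurrent ϕ z := by
  refine isChainRecurrent_of_forall_exists (x := x) fun δ hδ => ?_
  have hfreq := frequently_atTop.1 (mapClusterPt_iff_frequently.1 hz _ (Metric.ball_mem_nhds z hδ))
  obtain ⟨a, -, ha⟩ := hfreq 0
  obtain ⟨b, hab, hb⟩ := hfreq (a + 3)
  exact ⟨-b, -a, by linarith, hb, ha⟩

lemma isChainRecurrent_of_mem_stableSet_inter_unstableSet {p q : M}
    (hq : q ∈ stableSet ϕ p ∩ unstableSet ϕ p) : IsChainRecurrent ϕ q := by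
  intro ε hε
  obtain ⟨a, ha⟩ := eventually_atTop.1 (Metric.tendsto_nhds.1 hq.1 (ε / 2) (half_pos hε))
  obtain ⟨b, hb⟩ := eventually_atTop.1 (Metric.tendsto_nhds.1 hq.2 (ε / 2) (half_pos hε))
  have ha' := ha (1 + max 1 a) (by linarith [le_max_right 1 a])
  have hb' := hb (max 1 b) (le_max_right 1 b)
  refine ⟨max 1 a + 1 + max 1 b, by positivity, isEpsChain_of_three (x₁ := ϕ (max 1 a) q)
    (x₂ := ϕ (-max 1 b) q) (le_max_left 1 a) le_rfl (le_max_left 1 b) ?_ ?_ ?_⟩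
  · simpa using hε
  · rw [← ϕ.map_add]
    calc dist (ϕ (1 + max 1 a) q) (ϕ (-max 1 b) q)
        ≤ dist (ϕ (1 + max 1 a) q) p + dist (ϕ (-max 1 b) q) p := dist_triangle_right _ _ _
      _ < ε := by linarith
  · simpa [← ϕ.map_add] using hε

end Chains

section Chart

variable {M : Type*} [TopologicalSpace M] {n : ℕ}

-- Since the model flow is complete, an orbit cannot leave the chart: the set of times at which
-- both sides agree is clopen.
theorem Flow.semiconj_of_local [T2Space M] {E : Type*} [TopologicalSpace E] (ϕ : Flow ℝ M)
    (ψ : Flow ℝ E) {e : E → M} (he : Continuous e) (he' : IsOpen (range e))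
    (hloc : ∀ t v, (∀ s ∈ uIcc 0 t, ϕ s (e v) ∈ range e) → ϕ t (e v) = e (ψ t v))
    (t : ℝ) (v : E) : ϕ t (e v) = e (ψ t v) := by
  have hD : IsClopen {t | ϕ t (e v) = e (ψ t v)} := by
    refine ⟨isClosed_eq (ϕ.continuous continuous_id continuous_const)
      (he.comp (ψ.continuous continuous_id continuous_const)),
      Metric.isOpen_iff.2 fun t₀ ht₀ => ?_⟩
    obtain ⟨δ, hδ, hball⟩ := Metric.isOpen_iff.1
      (he'.preimage (ϕ.continuous continuous_id continuous_const)) 0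
      (show ϕ 0 (e (ψ t₀ v)) ∈ range e by simp [ϕ.map_zero_apply])
    refine ⟨δ, hδ, fun t ht => ?_⟩
    have hseg : ∀ s ∈ uIcc 0 (t - t₀), ϕ s (e (ψ t₀ v)) ∈ range e := fun s hs =>
      hball ((convex_ball 0 δ).ordConnected.uIcc_subset (Metric.mem_ball_self hδ)
        (by rwa [mem_ball_zero_iff, ← dist_eq_norm]) hs)
    change ϕ t (e v) = e (ψ t v)
    rw [← sub_add_cancel t t₀, ϕ.map_add, ht₀, hloc _ _ hseg, ← ψ.map_add]
  exact eq_univ_iff_forall.1 (hD.eq_univ ⟨0, by simp [ϕ.map_zero_apply, ψ.map_zero_apply]⟩) t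

structure IsHyperbolicChart (ϕ : Flow ℝ M) (p : M) (I : Finset (Fin n))
    (e : (Fin n → ℝ) → M) : Prop where
  isOpenEmbedding : IsOpenEmbedding e
  map_zero : e 0 = p
  semiconj : ∀ t v, ϕ t (e v) = e (hypFlow I t v)

theorem IsTopHyperbolicFixedPt.exists_isHyperbolicChart [T2Space M] {ϕ : Flow ℝ M} {p : M}
    {lam : ℕ} (hp : IsTopHyperbolicFixedPt n ϕ p lam) :
    ∃ e, IsHyperbolicChart ϕ p (Finset.univ.filter fun i : Fin n => (i : ℕ) < lam) e := by
  obtain ⟨-, -, U, hU, hpU, h, h0, hconj⟩ := hp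
  have he : IsOpenEmbedding (Subtype.val ∘ h.symm) :=
    hU.isOpenEmbedding_subtypeVal.comp h.symm.isOpenEmbedding
  have hrange : range (Subtype.val ∘ h.symm) = U := by
    rw [range_comp, h.symm.range_coe, image_univ, Subtype.range_coe]
  refine ⟨_, he, by simp [← h0],
    Flow.semiconj_of_local ϕ (hypFlow _) he.continuous he.isOpen_range fun t v hseg => ?_⟩
  rw [hrange] at hseg
  have := hconj t _ (h.symm v).2 hseg
  simp only [Subtype.coe_eta, Homeomorph.apply_symm_apply, hypFlow.modelFlow_eq] at this
  rw [← this]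
  simp only [Function.comp_apply, Homeomorph.symm_apply_apply]

namespace IsHyperbolicChart

variable {ϕ : Flow ℝ M} {p : M} {I : Finset (Fin n)} {e : (Fin n → ℝ) → M}

lemma reverse (hc : IsHyperbolicChart ϕ p I e) : IsHyperbolicChart ϕ.reverse p Iᶜ e :=
  ⟨hc.isOpenEmbedding, hc.map_zero, fun t v => by
    rw [Flow.reverse_apply, hc.semiconj, hypFlow.compl_apply]⟩

lemma apply_self (hc : IsHyperbolicChart ϕ p I e) (t : ℝ) : ϕ t p = p := by
  rw [← hc.map_zero, hc.semiconj]
  congr 1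
  funext i
  simp [hypFlow]

lemma mem_stableSet_iff (hc : IsHyperbolicChart ϕ p I e) (v : Fin n → ℝ) :
    e v ∈ stableSet ϕ p ↔ coordProj I v = 0 := by
  rw [← hypFlow.tendsto_atTop_nhds_zero_iff, hc.isOpenEmbedding.isInducing.tendsto_nhds_iff,
    hc.map_zero]
  simp only [stableSet, mem_ofPred_eq, hc.semiconj]
  rfl

lemma mem_unstableSet_iff (hc : IsHyperbolicChart ϕ p I e) (v : Fin n → ℝ) :
    e v ∈ unstableSet ϕ p ↔ coordProj Iᶜ v = 0 :=
  hc.reverse.mem_stableSet_iff v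

theorem exists_mem_closure_stableSet_ne (hc : IsHyperbolicChart ϕ p I e) {S : Set M}
    (hS : IsInvariant ϕ S) (hSu : Disjoint S (unstableSet ϕ p)) (hpS : p ∈ closure S) :
    ∃ q ∈ closure S, q ∈ stableSet ϕ p ∧ q ≠ p := by
  have he := hc.isOpenEmbedding
  have hA : IsInvariant (hypFlow I) (e ⁻¹' S) := fun t v hv => by
    simpa only [mem_preimage, hc.semiconj] using hS t hv
  have h0 : 0 ∈ closure (e ⁻¹' S) :=
    he.isOpenMap.preimage_closure_subset_closure_preimage (by rwa [mem_preimage, hc.map_zero])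
  have hAu : ∀ v ∈ e ⁻¹' S, coordProj Iᶜ v ≠ 0 := fun v hv hvu =>
    disjoint_left.1 hSu hv ((hc.mem_unstableSet_iff v).2 hvu)
  obtain ⟨ξ, hξS, hξ0, hξI⟩ :=
    hypFlow.exists_ne_zero_mem_closure_coordProj_eq_zero I hA h0 hAu
  refine ⟨e ξ, map_mem_closure he.continuous hξS (mapsTo_preimage e S),
    (hc.mem_stableSet_iff ξ).2 hξI, ?_⟩
  rw [← hc.map_zero]
  exact he.injective.ne hξ0

end IsHyperbolicChart

end Chart

section SmaleOrder

variable {M : Type*} [TopologicalSpace M] {ϕ : Flow ℝ M}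

lemma stableSet_reverse (p : M) : stableSet ϕ.reverse p = unstableSet ϕ p := rfl

lemma unstableSet_reverse (p : M) : unstableSet ϕ.reverse p = stableSet ϕ p := by
  simp [unstableSet, stableSet]

lemma isInvariant_unstableSet (p : M) : IsInvariant ϕ (unstableSet ϕ p) := fun t y hy =>
  (hy.comp (tendsto_atTop_add_const_right atTop (-t) tendsto_id)).congr fun s => by
    rw [Function.comp_apply, ← ϕ.map_add, id, neg_add, neg_neg]

lemma disjoint_unstableSet [T2Space M] {p q : M} (hpq : p ≠ q) :
    Disjoint (unstableSet ϕ p) (unstableSet ϕ q) :=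
  disjoint_left.2 fun _ hp hq => hpq (tendsto_nhds_unique hp hq)

lemma eq_of_mem_stableSet_of_forall_apply_eq [T2Space M] {p q : M} (hq : ∀ t, ϕ t q = q)
    (hqp : q ∈ stableSet ϕ p) : q = p :=
  tendsto_nhds_unique (tendsto_const_nhds.congr fun t => (hq t).symm) hqp

lemma mem_closure_of_mem_unstableSet {S : Set M} (hS : IsInvariant ϕ S) {x p : M}
    (hx : x ∈ closure S) (hxp : x ∈ unstableSet ϕ p) : p ∈ closure S :=
  isClosed_closure.mem_of_tendsto hxp
    (Eventually.of_forall fun t => (hS (-t)).closure (ϕ.continuous_toFun _) hx)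

variable [T2Space M] {n : ℕ} {ι : Type*} [LinearOrder ι] {p : ι → M}

theorem le_of_mem_closure_unstableSet [WellFoundedGT ι] (hp : Function.Injective p)
    (hchart : ∀ l, ∃ I e, IsHyperbolicChart (n := n) ϕ (p l) I e)
    (hα : ∀ x, ∃ j, x ∈ unstableSet ϕ (p j))
    (hhom : ∀ l, stableSet ϕ (p l) ∩ unstableSet ϕ (p l) ⊆ {p l})
    (hord : ∀ i j, (stableSet ϕ (p i) ∩ unstableSet ϕ (p j)).Nonempty → i ≠ j → i < j)
    {i l : ι} (hl : p l ∈ closure (unstableSet ϕ (p i))) : l ≤ i := by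
  induction l using WellFoundedGT.induction with
  | ind l ih =>
    rcases eq_or_ne l i with rfl | hli
    · exact le_rfl
    obtain ⟨I, e, hc⟩ := hchart l
    obtain ⟨q, hqi, hql, hqp⟩ := hc.exists_mem_closure_stableSet_ne (isInvariant_unstableSet _)
      (disjoint_unstableSet (hp.ne hli.symm)) hl
    obtain ⟨l', hql'⟩ := hα q
    have hll' : l < l' := hord l l' ⟨q, hql, hql'⟩ fun h => hqp (hhom l ⟨hql, h ▸ hql'⟩)
    exact hll'.le.trans
      (ih l' hll' (mem_closure_of_mem_unstableSet (isInvariant_unstableSet _) hqi hql'))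

theorem closure_unstableSet_diff_subset [WellFoundedGT ι] (hp : Function.Injective p)
    (hchart : ∀ l, ∃ I e, IsHyperbolicChart (n := n) ϕ (p l) I e)
    (hα : ∀ x, ∃ j, x ∈ unstableSet ϕ (p j))
    (hhom : ∀ l, stableSet ϕ (p l) ∩ unstableSet ϕ (p l) ⊆ {p l})
    (hord : ∀ i j, (stableSet ϕ (p i) ∩ unstableSet ϕ (p j)).Nonempty → i ≠ j → i < j)
    (i : ι) :
    closure (unstableSet ϕ (p i)) \ (unstableSet ϕ (p i) ∪ {p i}) ⊆
      ⋃ j, ⋃ _ : j < i, unstableSet ϕ (p j) := by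
  rintro x ⟨hx, hxi⟩
  obtain ⟨j, hxj⟩ := hα x
  have hji : j ≠ i := by rintro rfl; exact hxi (Or.inl hxj)
  exact mem_iUnion₂.2 ⟨j, (le_of_mem_closure_unstableSet hp hchart hα hhom hord
    (mem_closure_of_mem_unstableSet (isInvariant_unstableSet _) hx hxj)).lt_of_ne hji, hxj⟩

theorem closure_stableSet_diff_subset [WellFoundedLT ι] (hp : Function.Injective p)
    (hchart : ∀ l, ∃ I e, IsHyperbolicChart (n := n) ϕ (p l) I e)
    (hω : ∀ x, ∃ j, x ∈ stableSet ϕ (p j))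
    (hhom : ∀ l, stableSet ϕ (p l) ∩ unstableSet ϕ (p l) ⊆ {p l})
    (hord : ∀ i j, (stableSet ϕ (p i) ∩ unstableSet ϕ (p j)).Nonempty → i ≠ j → i < j)
    (i : ι) :
    closure (stableSet ϕ (p i)) \ (stableSet ϕ (p i) ∪ {p i}) ⊆
      ⋃ j, ⋃ _ : i < j, stableSet ϕ (p j) := by
  have := closure_unstableSet_diff_subset (ϕ := ϕ.reverse) (ι := ιᵒᵈ) (p := p)
    hp (fun l => let ⟨I, e, hc⟩ := hchart l.ofDual; ⟨Iᶜ, e, hc.reverse⟩)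
    (by simp only [unstableSet_reverse]; exact hω)
    (fun l => by simpa only [stableSet_reverse, unstableSet_reverse, inter_comm] using hhom l)
    (fun i j hij hne => hord j i
      (by simpa only [stableSet_reverse, unstableSet_reverse, inter_comm] using hij) hne.symm)
    (OrderDual.toDual i)
  simp only [unstableSet_reverse] at this
  exact this

end SmaleOrder

section LimitSets

variable {M : Type*} [MetricSpace M] [CompactSpace M] {ϕ : Flow ℝ M} {P : Set M}

lemma exists_mem_stableSet_of_isChainRecurrent_mem (hP : P.Finite)
    (hR : ∀ z, IsChainRecurrent ϕ z → z ∈ P) (x : M) : ∃ z ∈ P, x ∈ stableSet ϕ z :=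
  (ϕ.continuous continuous_id continuous_const).exists_tendsto_of_mapClusterPt_mem hP
    fun _ hz => hR _ (isChainRecurrent_of_mapClusterPt hz)

lemma exists_mem_unstableSet_of_isChainRecurrent_mem (hP : P.Finite)
    (hR : ∀ z, IsChainRecurrent ϕ z → z ∈ P) (x : M) : ∃ z ∈ P, x ∈ unstableSet ϕ z :=
  (ϕ.continuous continuous_neg continuous_const).exists_tendsto_of_mapClusterPt_mem hP
    fun _ hz => hR _ (isChainRecurrent_of_mapClusterPt_neg hz)

end LimitSets

theorem stmt3_general {M : Type*} [MetricSpace M] [CompactSpace M] (n : ℕ)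
    (f : ℝ → M → M)
    (hf_cont : Continuous fun q : ℝ × M => f q.1 q.2)
    (hf_zero : ∀ x, f 0 x = x)
    (hf_add : ∀ s t : ℝ, ∀ x, f t (f s x) = f (t + s) x)
    (R : Set M) (hR : R = {x | IsChainRecurrent f x})
    (hRhyp : ∀ p ∈ R, ∃ lam : ℕ, IsTopHyperbolicFixedPt n f p lam)
    (k : ℕ) (p : Fin k → M)
    (hp_inj : Function.Injective p) (hp_range : Set.range p = R)
    (hp_ord : ∀ i j : Fin k, (stableSet f (p i) ∩ unstableSet f (p j)).Nonempty →
      i ≠ j → i < j) :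
    ∀ i : Fin k,
      (closure (unstableSet f (p i)) \ (unstableSet f (p i) ∪ {p i}) ⊆
        ⋃ j : Fin k, ⋃ _ : j < i, unstableSet f (p j)) ∧
      (closure (stableSet f (p i)) \ (stableSet f (p i) ∪ {p i}) ⊆
        ⋃ j : Fin k, ⋃ _ : i < j, stableSet f (p j)) := by
  let ϕ : Flow ℝ M := ⟨f, hf_cont, fun s t x => (hf_add t s x).symm, hf_zero⟩
  have hcr : ∀ z, IsChainRecurrent ϕ z → z ∈ range p := fun z hz => hp_range ▸ hR ▸ hz
  have hchart : ∀ l, ∃ I e, IsHyperbolicChart (n := n) ϕ (p l) I e := fun l =>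
    let ⟨_, hl⟩ := hRhyp (p l) (hp_range ▸ mem_range_self l)
    let ⟨e, he⟩ := hl.exists_isHyperbolicChart (ϕ := ϕ)
    ⟨_, e, he⟩
  have hα : ∀ x, ∃ j, x ∈ unstableSet ϕ (p j) := fun x => by
    simpa using exists_mem_unstableSet_of_isChainRecurrent_mem (finite_range p) hcr x
  have hω : ∀ x, ∃ j, x ∈ stableSet ϕ (p j) := fun x => by
    simpa using exists_mem_stableSet_of_isChainRecurrent_mem (finite_range p) hcr x
  have hhom : ∀ l, stableSet ϕ (p l) ∩ unstableSet ϕ (p l) ⊆ {p l} := fun l q hq => by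
    obtain ⟨a, rfl⟩ := hcr q (isChainRecurrent_of_mem_stableSet_inter_unstableSet hq)
    obtain ⟨_, _, hc⟩ := hchart a
    exact eq_of_mem_stableSet_of_forall_apply_eq hc.apply_self hq.1
  exact fun i => ⟨closure_unstableSet_diff_subset hp_inj hchart hα hhom hp_ord i,
    closure_stableSet_diff_subset hp_inj hchart hω hhom hp_ord i⟩

/-- With the fixed points enumerated compatibly with the Smale order,
the frontier of each unstable (resp. stable) manifold lies in the union of unstable
(resp. stable) manifolds of earlier (resp. later) fixed points. -/
theorem stmt3 {M : Type*} [MetricSpace M] [CompactSpace M] (n : ℕ)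
    (hM : LocallyEuclidean n M)
    (f : ℝ → M → M)
    (hf_cont : Continuous fun q : ℝ × M => f q.1 q.2)
    (hf_zero : ∀ x, f 0 x = x)
    (hf_add : ∀ s t : ℝ, ∀ x, f t (f s x) = f (t + s) x)
    (R : Set M) (hR : R = {x | IsChainRecurrent f x})
    (hRhyp : ∀ p ∈ R, ∃ lam : ℕ, IsTopHyperbolicFixedPt n f p lam)
    (k : ℕ) (p : Fin k → M)
    (hp_inj : Function.Injective p) (hp_range : Set.range p = R)
    (hp_ord : ∀ i j : Fin k, (stableSet f (p i) ∩ unstableSet f (p j)).Nonempty →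
      i ≠ j → i < j) :
    ∀ i : Fin k,
      (closure (unstableSet f (p i)) \ (unstableSet f (p i) ∪ {p i}) ⊆
        ⋃ j : Fin k, ⋃ _ : j < i, unstableSet f (p j)) ∧
      (closure (stableSet f (p i)) \ (stableSet f (p i) ∪ {p i}) ⊆
        ⋃ j : Fin k, ⋃ _ : i < j, stableSet f (p j)) :=
  stmt3_general n f hf_cont hf_zero hf_add R hR hRhyp k p hp_inj hp_range hp_ord
end

section
/- Let f be a topological flow on a closed topological n-manifold M and let p be a topologically hyperbolic fixed point of f of index λ, with neighborhood U_p and conjugating homeomorphism h_p : U_p → ℝ^n, h_p(p) = 0. Set E^s_λ = {x ∈ ℝ^n : x_1 = … = x_λ = 0} and E^u_λ = {x ∈ ℝ^n : x_{λ+1} = … = x_n = 0}. Then ⋃_{t∈ℝ} f(t, h_p^{-1}(E^s_λ)) = {y ∈ M : f(t,y) → p as t → +∞} and ⋃_{t∈ℝ} f(t, h_p^{-1}(E^u_λ)) = {y ∈ M : f(−t,y) → p as t → +∞}. -/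
open Filter Topology Set

/-! In the chart the flow is linear, expanding some coordinates and contracting the others.
A point of the local stable set agrees with its model orbit `h⁻¹(2⁻ᵗ x)` for as long as its
orbit stays in `U`; since the model orbit never leaves `U`, a first-exit-time argument shows
that the flow orbit never does either, so it tends to `p`. Conversely, the orbit of a point of
`W^s_p` eventually stays in `h⁻¹(ball 0 1)`, where the expanding coordinates are multiplied by
`2ᵗ` yet remain bounded, so they vanish. Since `W^s_p` is invariant, this identifies it with the
saturation of the local stable set; the unstable case is the stable case of the reversed flow. -/

theorem Continuous.mapsTo_Ici_of_eq_while_mem {X : Type*} [TopologicalSpace X] [T2Space X]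
    {g v : ℝ → X} {U : Set X} (hg : Continuous g) (hv : Continuous v) (hU : IsOpen U)
    (hvU : ∀ t, v t ∈ U) (hg0 : g 0 ∈ U)
    (hgv : ∀ t, 0 ≤ t → (∀ s ∈ Icc 0 t, g s ∈ U) → g t = v t) :
    MapsTo g (Ici 0) U := by
  intro t₀ ht₀
  by_contra ht₀U
  set C := Ici (0 : ℝ) ∩ g ⁻¹' Uᶜ
  have hbdd : BddBelow C := ⟨0, fun t ht => ht.1⟩
  obtain ⟨hT0, hTU⟩ : sInf C ∈ C :=
    (isClosed_Ici.inter (hU.isClosed_compl.preimage hg)).csInf_mem ⟨t₀, ht₀, ht₀U⟩ hbdd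
  have hbefore : ∀ s, 0 ≤ s → s < sInf C → g s ∈ U := fun s hs hsT =>
    by_contra fun hn => (csInf_le hbdd ⟨hs, hn⟩).not_gt hsT
  have heq : EqOn g v (Ico 0 (sInf C)) := fun t ht =>
    hgv t ht.1 fun s hs => hbefore s hs.1 (hs.2.trans_lt ht.2)
  apply hTU
  rcases (show (0 : ℝ) ≤ sInf C from hT0).eq_or_lt with hT | hT
  · rwa [← hT]
  · have hT_mem : sInf C ∈ closure (Ico 0 (sInf C)) := by
      rw [closure_Ico hT.ne]
      exact right_mem_Icc.2 hT.le
    rw [show g (sInf C) = v (sInf C) from (isClosed_eq hg hv).closure_subset_iff.2 heq hT_mem]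
    exact hvU _

noncomputable def expandingFlow {n : ℕ} (P : Fin n → Prop) [DecidablePred P] (t : ℝ)
    (x : Fin n → ℝ) : Fin n → ℝ :=
  fun i => if P i then (2 : ℝ) ^ t * x i else (2 : ℝ) ^ (-t) * x i

section ModelFlow

variable {n : ℕ} {P : Fin n → Prop} [DecidablePred P]

theorem modelFlow_neg (lam : ℕ) (t : ℝ) :
    modelFlow n lam (-t) = expandingFlow (fun i : Fin n => lam ≤ (i : ℕ)) t := by
  ext x i
  by_cases hi : (i : ℕ) < lam <;> simp [modelFlow, expandingFlow, hi, le_of_not_gt]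

theorem expandingFlow_of_forall_eq_zero {x : Fin n → ℝ} (hx : ∀ i, P i → x i = 0) (t : ℝ) :
    expandingFlow P t x = (2 : ℝ) ^ (-t) • x := by
  ext i
  by_cases hi : P i <;> simp [expandingFlow, hi, hx]

theorem eq_zero_of_forall_norm_expandingFlow_lt_one {x : Fin n → ℝ}
    (hx : ∀ t, 0 ≤ t → ‖expandingFlow P t x‖ < 1) (i : Fin n) (hi : P i) : x i = 0 := by
  have hbound : ∀ t : ℝ, 0 ≤ t → |x i| ≤ (2 : ℝ) ^ (-t) := fun t ht => by
    have hpos : (0 : ℝ) < 2 ^ t := by positivity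
    have hlt : 2 ^ t * |x i| < 1 := by
      simpa [expandingFlow, hi, abs_mul, abs_of_pos hpos] using
        (norm_le_pi_norm (expandingFlow P t x) i).trans_lt (hx t ht)
    rw [Real.rpow_neg zero_le_two, ← one_div, le_div_iff₀' hpos]
    exact hlt.le
  have hlim : Tendsto (fun t : ℝ => (2 : ℝ) ^ (-t)) atTop (𝓝 0) :=
    (tendsto_rpow_atBot_of_base_gt_one 2 one_lt_two).comp tendsto_neg_atTop_atBot
  exact abs_nonpos_iff.1 <| ge_of_tendsto hlim <|
    (eventually_ge_atTop 0).mono hbound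

end ModelFlow

def IsForwardConjugacy {X : Type*} [TopologicalSpace X] {n : ℕ} (ϕ : Flow ℝ X) {U : Set X}
    (h : U ≃ₜ (Fin n → ℝ)) (P : Fin n → Prop) [DecidablePred P] : Prop :=
  ∀ t, 0 ≤ t → ∀ y : U, (∀ s ∈ Icc 0 t, ϕ s y ∈ U) → ϕ t y = h.symm (expandingFlow P t (h y))

namespace Flow

variable {X : Type*} [TopologicalSpace X] (ϕ : Flow ℝ X) {p : X}

theorem map_mem_stableSet {y : X} (hy : y ∈ stableSet ϕ p) (s : ℝ) : ϕ s y ∈ stableSet ϕ p :=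
  (hy.comp (tendsto_atTop_add_const_right _ s tendsto_id)).congr fun t => ϕ.map_add t s y

theorem iUnion_image_eq_stableSet {A : Set X} (hA : A ⊆ stableSet ϕ p)
    (hreach : ∀ y ∈ stableSet ϕ p, ∃ t, ϕ t y ∈ A) : ⋃ t, ϕ t '' A = stableSet ϕ p := by
  refine Subset.antisymm (iUnion_subset fun t => image_subset_iff.2 fun a ha =>
    ϕ.map_mem_stableSet (hA ha) t) fun y hy => ?_
  obtain ⟨t, ht⟩ := hreach y hy
  refine mem_iUnion.2 ⟨-t, ϕ t y, ht, ?_⟩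
  rw [← ϕ.map_add, neg_add_cancel, ϕ.map_zero_apply]

end Flow

namespace IsForwardConjugacy

variable {X : Type*} [TopologicalSpace X] {n : ℕ} {ϕ : Flow ℝ X} {U : Set X}
  {h : U ≃ₜ (Fin n → ℝ)} {P : Fin n → Prop} [DecidablePred P]

theorem flow_eq_of_mem_localStable [T2Space X] (hconj : IsForwardConjugacy ϕ h P)
    (hU : IsOpen U) {y : U} (hy : ∀ i, P i → h y i = 0) {t : ℝ} (ht : 0 ≤ t) :
    ϕ t y = h.symm ((2 : ℝ) ^ (-t) • h y) := by
  have hv : Continuous fun t : ℝ => (h.symm ((2 : ℝ) ^ (-t) • h y) : X) := by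
    have := h.symm.continuous
    fun_prop (disch := norm_num)
  have hgv : ∀ t, 0 ≤ t → (∀ s ∈ Icc 0 t, ϕ s y ∈ U) → ϕ t y = h.symm ((2 : ℝ) ^ (-t) • h y) :=
    fun t ht hs => by rw [hconj t ht y hs, expandingFlow_of_forall_eq_zero hy]
  have hstay : MapsTo (fun t => ϕ t y) (Ici 0) U :=
    (ϕ.continuous continuous_id continuous_const).mapsTo_Ici_of_eq_while_mem hv hU
      (fun t => (h.symm _).2) (by simp [ϕ.map_zero_apply]) hgv
  exact hgv t ht fun s hs => hstay hs.1

theorem mem_stableSet [T2Space X] (hconj : IsForwardConjugacy ϕ h P) (hU : IsOpen U)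
    {p : U} (hp : h p = 0) {y : U} (hy : ∀ i, P i → h y i = 0) : ↑y ∈ stableSet ϕ p := by
  have hlim : Tendsto (fun t : ℝ => (2 : ℝ) ^ (-t) • h y) atTop (𝓝 0) := by
    simpa using ((tendsto_rpow_atBot_of_base_gt_one 2 one_lt_two).comp
      tendsto_neg_atTop_atBot).smul_const (h y)
  have hsymm : Tendsto (fun x => (h.symm x : X)) (𝓝 (h p)) (𝓝 p) := by
    simpa [Function.comp_def] using (continuous_subtype_val.comp h.symm.continuous).tendsto (h p)
  rw [hp] at hsymm
  exact (hsymm.comp hlim).congr' <| (eventually_ge_atTop 0).mono fun t ht =>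
    (hconj.flow_eq_of_mem_localStable hU hy ht).symm

theorem exists_flow_mem_localStable (hconj : IsForwardConjugacy ϕ h P) (hU : IsOpen U)
    {p : U} (hp : h p = 0) {y : X} (hy : y ∈ stableSet ϕ p) :
    ∃ t, ∃ w : U, ϕ t y = w ∧ ∀ i, P i → h w i = 0 := by
  set V : Set X := (↑) '' (h ⁻¹' Metric.ball 0 1)
  have hV : V ∈ 𝓝 (p : X) :=
    (hU.isOpenMap_subtype_val _ (Metric.isOpen_ball.preimage h.continuous)).mem_nhds
      ⟨p, by simp [hp], rfl⟩
  obtain ⟨S, hS⟩ := eventually_atTop.1 (hy.eventually hV)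
  obtain ⟨w, -, hwS⟩ := hS S le_rfl
  have horbit : ∀ s, 0 ≤ s → ϕ s w ∈ V := fun s hs => by
    rw [hwS, ← ϕ.map_add]
    exact hS _ (by linarith)
  refine ⟨S, w, hwS.symm, eq_zero_of_forall_norm_expandingFlow_lt_one fun t ht => ?_⟩
  obtain ⟨u, hu, hut⟩ := horbit t ht
  have hstay : ∀ s ∈ Icc 0 t, ϕ s w ∈ U := fun s hs => by
    obtain ⟨u, -, hus⟩ := horbit s hs.1
    exact hus ▸ u.2
  obtain rfl : u = h.symm (expandingFlow P t (h w)) := Subtype.ext (hut.trans (hconj t ht w hstay))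
  simpa using hu

theorem iUnion_image_localStable_eq_stableSet [T2Space X] (hconj : IsForwardConjugacy ϕ h P)
    (hU : IsOpen U) {p : U} (hp : h p = 0) :
    ⋃ t, ϕ t '' ((↑) '' (h.symm '' {x | ∀ i, P i → x i = 0})) = stableSet ϕ p := by
  refine ϕ.iUnion_image_eq_stableSet ?_ fun y hy => ?_
  · rintro _ ⟨_, ⟨x, hx, rfl⟩, rfl⟩
    exact hconj.mem_stableSet hU hp (by simpa using hx)
  · obtain ⟨t, w, hwt, hw⟩ := hconj.exists_flow_mem_localStable hU hp hy
    exact ⟨t, hwt ▸ ⟨w, ⟨h w, hw, h.symm_apply_apply w⟩, rfl⟩⟩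

end IsForwardConjugacy

theorem Flow.isForwardConjugacy_of_modelFlow {X : Type*} [TopologicalSpace X] {n lam : ℕ}
    {ϕ : Flow ℝ X} {U : Set X} {h : U ≃ₜ (Fin n → ℝ)}
    (hconj : ∀ (t : ℝ) (y : X) (hy : y ∈ U) (hfy : ∀ s ∈ uIcc (0 : ℝ) t, ϕ s y ∈ U),
      (h ⟨ϕ t y, hfy t right_mem_uIcc⟩ : Fin n → ℝ) = modelFlow n lam t (h ⟨y, hy⟩)) :
    IsForwardConjugacy ϕ h (fun i : Fin n => (i : ℕ) < lam) ∧
      IsForwardConjugacy ϕ.reverse h (fun i : Fin n => lam ≤ (i : ℕ)) := by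
  have hflow : ∀ t (y : U) (hfy : ∀ s ∈ uIcc 0 t, ϕ s y ∈ U),
      ϕ t y = h.symm (modelFlow n lam t (h y)) := fun t y hfy =>
    congrArg Subtype.val (h.eq_symm_apply.2 (hconj t y y.2 hfy))
  refine ⟨fun t ht y hfy => hflow t y (by rwa [uIcc_of_le ht]), fun t ht y hfy => ?_⟩
  rw [reverse_apply, hflow (-t) y, modelFlow_neg]
  intro s hs
  rw [uIcc_of_ge (neg_nonpos.2 ht)] at hs
  simpa using hfy (-s) ⟨by linarith [hs.2], by linarith [hs.1]⟩

theorem stmt5_general {M : Type*} [MetricSpace M] (n : ℕ)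
    (f : ℝ → M → M)
    (hf_cont : Continuous fun q : ℝ × M => f q.1 q.2)
    (hf_zero : ∀ x, f 0 x = x)
    (hf_add : ∀ s t : ℝ, ∀ x, f t (f s x) = f (t + s) x)
    (p : M) (lam : ℕ)
    (U : Set M) (hU : IsOpen U) (hpU : p ∈ U) (h : U ≃ₜ (Fin n → ℝ))
    (hp0 : h ⟨p, hpU⟩ = 0)
    (hconj : ∀ (t : ℝ) (y : M) (hy : y ∈ U) (hfy : ∀ s ∈ Set.uIcc (0 : ℝ) t, f s y ∈ U),
      (h ⟨f t y, hfy t Set.right_mem_uIcc⟩ : Fin n → ℝ) = modelFlow n lam t (h ⟨y, hy⟩)) :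
    (⋃ t : ℝ, f t '' (Subtype.val ''
        (h.symm '' {x : Fin n → ℝ | ∀ i : Fin n, (i : ℕ) < lam → x i = 0})))
      = stableSet f p ∧
    (⋃ t : ℝ, f t '' (Subtype.val ''
        (h.symm '' {x : Fin n → ℝ | ∀ i : Fin n, lam ≤ (i : ℕ) → x i = 0})))
      = unstableSet f p := by
  obtain ⟨ϕ, rfl⟩ : ∃ ϕ : Flow ℝ M, ϕ.toFun = f :=
    ⟨⟨f, hf_cont, fun t₁ t₂ x => (hf_add t₂ t₁ x).symm, hf_zero⟩, rfl⟩
  obtain ⟨hstable, hunstable⟩ := Flow.isForwardConjugacy_of_modelFlow hconj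
  refine ⟨hstable.iUnion_image_localStable_eq_stableSet hU hp0, ?_⟩
  rw [← neg_surjective.iUnion_comp]
  exact hunstable.iUnion_image_localStable_eq_stableSet hU hp0

/-- The saturation under the flow of the local stable (resp. unstable)
set `h⁻¹(E^s_λ)` (resp. `h⁻¹(E^u_λ)`) of a topologically hyperbolic fixed point equals
the global stable (resp. unstable) manifold. -/
theorem stmt5 {M : Type*} [MetricSpace M] [CompactSpace M] (n : ℕ)
    (hM : LocallyEuclidean n M)
    (f : ℝ → M → M)
    (hf_cont : Continuous fun q : ℝ × M => f q.1 q.2)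
    (hf_zero : ∀ x, f 0 x = x)
    (hf_add : ∀ s t : ℝ, ∀ x, f t (f s x) = f (t + s) x)
    (p : M) (lam : ℕ) (hlam : lam ≤ n)
    (hfix : ∀ t : ℝ, f t p = p)
    (U : Set M) (hU : IsOpen U) (hpU : p ∈ U) (h : U ≃ₜ (Fin n → ℝ))
    (hp0 : h ⟨p, hpU⟩ = 0)
    (hconj : ∀ (t : ℝ) (y : M) (hy : y ∈ U) (hfy : ∀ s ∈ Set.uIcc (0 : ℝ) t, f s y ∈ U),
      (h ⟨f t y, hfy t Set.right_mem_uIcc⟩ : Fin n → ℝ) = modelFlow n lam t (h ⟨y, hy⟩)) :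
    (⋃ t : ℝ, f t '' (Subtype.val ''
        (h.symm '' {x : Fin n → ℝ | ∀ i : Fin n, (i : ℕ) < lam → x i = 0})))
      = stableSet f p ∧
    (⋃ t : ℝ, f t '' (Subtype.val ''
        (h.symm '' {x : Fin n → ℝ | ∀ i : Fin n, lam ≤ (i : ℕ) → x i = 0})))
      = unstableSet f p :=
  stmt5_general n f hf_cont hf_zero hf_add p lam U hU hpU h hp0 hconj
end

section
/- Let f be a topological flow on a compact metric space M. If the chain recurrent set R_f of f is finite, then every point of R_f is a fixed point of f, i.e. f(t,x) = x for all t ∈ ℝ and all x ∈ R_f. -/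
open Filter Topology Set

/-
A chain recurrent point stays chain recurrent along its orbit, because the time-`s` map is
uniformly continuous (`M` is compact) and commutes with the flow, so it carries `δ`-chains to
`ε`-chains. The orbit of a chain recurrent point is therefore a connected subset of the finite,
hence discrete, chain recurrent set, so it is a single point.
-/

section ChainRecurrence

variable {M N : Type*} [MetricSpace M] [MetricSpace N] {f : ℝ → M → M} {g : ℝ → N → N}
  {φ : M → N}

theorem IsEpsChain.map (hconj : ∀ t x, φ (f t x) = g t (φ x)) {δ ε T : ℝ}
    (hφ : ∀ ⦃a b⦄, dist a b < δ → dist (φ a) (φ b) < ε) {x y : M} (hxy : IsEpsChain f δ T x y) :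
    IsEpsChain g ε T (φ x) (φ y) := by
  obtain ⟨m, xs, ts, hm, rfl, rfl, hstep, hsum⟩ := hxy
  refine ⟨m, φ ∘ xs, ts, hm, rfl, rfl, fun i hi => ⟨(hstep i hi).1, ?_⟩, hsum⟩
  simpa only [Function.comp_apply, hconj] using hφ (hstep i hi).2

theorem IsChainRecurrent.map (hconj : ∀ t x, φ (f t x) = g t (φ x)) (hφ : UniformContinuous φ)
    {x : M} (hx : IsChainRecurrent f x) : IsChainRecurrent g (φ x) := by
  intro ε hε
  obtain ⟨δ, hδ, hφδ⟩ := Metric.uniformContinuous_iff.mp hφ ε hε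
  obtain ⟨T, hT, hchain⟩ := hx δ hδ
  exact ⟨T, hT, hchain.map hconj hφδ⟩

theorem IsChainRecurrent.flow [CompactSpace M] (hf_cont : Continuous fun q : ℝ × M => f q.1 q.2)
    (hf_add : ∀ s t : ℝ, ∀ x, f t (f s x) = f (t + s) x) {x : M} (hx : IsChainRecurrent f x)
    (s : ℝ) : IsChainRecurrent f (f s x) :=
  hx.map (φ := f s) (fun t y => by rw [hf_add, hf_add, add_comm])
    (CompactSpace.uniformContinuous_of_continuous (hf_cont.comp (Continuous.prodMk_right s)))

end ChainRecurrence

/-- If the chain recurrent set of a topological flow on a compact metric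
space is finite, then every chain recurrent point is a fixed point. -/
theorem stmt6 {M : Type*} [MetricSpace M] [CompactSpace M]
    (f : ℝ → M → M)
    (hf_cont : Continuous fun q : ℝ × M => f q.1 q.2)
    (hf_zero : ∀ x, f 0 x = x)
    (hf_add : ∀ s t : ℝ, ∀ x, f t (f s x) = f (t + s) x)
    (hfin : {x : M | IsChainRecurrent f x}.Finite) :
    ∀ x : M, IsChainRecurrent f x → ∀ t : ℝ, f t x = x := by
  intro x hx t
  have horbit : Continuous fun s => f s x := hf_cont.comp (Continuous.prodMk_left x)
  calc f t x = f 0 x :=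
        isPreconnected_univ.constant_of_mapsTo hfin.isDiscrete horbit.continuousOn
          (fun s _ => hx.flow hf_cont hf_add s) (mem_univ t) (mem_univ 0)
    _ = x := hf_zero x
end

section
/- Let n ≥ 2 and λ ∈ {1,…,n−1}. The set d = {x ∈ ℝ^n : Σ_{i=λ+1}^{n} x_i² ≤ 1/4 and −Σ_{i=1}^{λ} x_i² + Σ_{i=λ+1}^{n} x_i² = −1/3}, with the subspace topology from ℝ^n, is homeomorphic to 𝕊^{λ−1} × 𝔻^{n−λ}. -/
open Filter Topology Set

/-- The standard `(m-1)`-sphere `𝕊^{m-1} ⊆ ℝ^m`. -/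
def sphereSet (m : ℕ) : Set (Fin m → ℝ) := {x | ∑ i, (x i) ^ 2 = 1}

/-- The standard closed `m`-disk `𝔻^m ⊆ ℝ^m`. -/
def diskSet (m : ℕ) : Set (Fin m → ℝ) := {x | ∑ i, (x i) ^ 2 ≤ 1}

/-!
Split `ℝ^n = ℝ^λ × ℝ^{n-λ}` as `x = (u, v)`. On `d` we have `|u|² = |v|² + 1/3 > 0`, so
`(u, v) ↦ (u / |u|, 2 v)` lands in `𝕊^{λ-1} × 𝔻^{n-λ}`, with continuous inverse
`(s, w) ↦ (√(|w|²/4 + 1/3) s, w / 2)`. Only the continuity and the degree-2 homogeneity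
of the two squared norms enter.
-/

section HyperboloidBand

variable {E F : Type*}

def hyperboloidBand (q : E → ℝ) (q' : F → ℝ) (ρ c : ℝ) : Set (E × F) :=
  {p | q' p.2 ≤ ρ ^ 2 ∧ q p.1 = q' p.2 + c}

variable {q : E → ℝ} {q' : F → ℝ} {ρ c : ℝ}

lemma pos_of_mem_hyperboloidBand (hq'_nonneg : ∀ y, 0 ≤ q' y) (hc : 0 < c) {p : E × F}
    (hp : p ∈ hyperboloidBand q q' ρ c) : 0 < q p.1 := by
  rw [hp.2]
  linarith [hq'_nonneg p.2]

lemma smul_inv_sqrt_eq_one [SMul ℝ E] (hq_smul : ∀ (t : ℝ) x, q (t • x) = t ^ 2 * q x)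
    {x : E} (hx : 0 < q x) : q ((√(q x))⁻¹ • x) = 1 := by
  rw [hq_smul, inv_pow, Real.sq_sqrt hx.le, inv_mul_cancel₀ hx.ne']

variable [TopologicalSpace E] [MulAction ℝ E] [ContinuousSMul ℝ E]
  [TopologicalSpace F] [MulAction ℝ F] [ContinuousSMul ℝ F]

noncomputable def hyperboloidBandHomeomorph (hq : Continuous q)
    (hq_smul : ∀ (t : ℝ) x, q (t • x) = t ^ 2 * q x) (hq' : Continuous q')
    (hq'_smul : ∀ (t : ℝ) y, q' (t • y) = t ^ 2 * q' y) (hq'_nonneg : ∀ y, 0 ≤ q' y)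
    (hρ : 0 < ρ) (hc : 0 < c) :
    hyperboloidBand q q' ρ c ≃ₜ {x | q x = 1} × {y | q' y ≤ 1} where
  toFun p :=
    (⟨(√(q p.1.1))⁻¹ • p.1.1,
        smul_inv_sqrt_eq_one hq_smul (pos_of_mem_hyperboloidBand hq'_nonneg hc p.2)⟩,
      ⟨ρ⁻¹ • p.1.2, by
        show q' (ρ⁻¹ • p.1.2) ≤ 1
        rw [hq'_smul, inv_pow, inv_mul_le_one₀ (by positivity)]
        exact p.2.1⟩)
  invFun s := ⟨(√(ρ ^ 2 * q' s.2 + c) • s.1.1, ρ • s.2.1), by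
    have hs₁ : q s.1.1 = 1 := s.1.2
    have hs₂ : q' s.2.1 ≤ 1 := s.2.2
    refine ⟨?_, ?_⟩
    · simp only [hq'_smul]
      nlinarith
    · simp only [hq_smul, hq'_smul, hs₁, mul_one]
      rw [Real.sq_sqrt (by nlinarith [hq'_nonneg s.2.1])]⟩
  left_inv p := by
    obtain ⟨⟨u, v⟩, -, huv⟩ := p
    have hu : 0 < q u := by rw [huv]; linarith [hq'_nonneg v]
    have hsqrt : √(ρ ^ 2 * q' (ρ⁻¹ • v) + c) = √(q u) := by
      rw [hq'_smul, ← mul_assoc, inv_pow, mul_inv_cancel₀ (by positivity), one_mul, huv]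
    ext
    · simp only [hsqrt, smul_smul, mul_inv_cancel₀ (Real.sqrt_pos.mpr hu).ne', one_smul]
    · simp only [smul_smul, mul_inv_cancel₀ hρ.ne', one_smul]
  right_inv s := by
    obtain ⟨⟨x, hx⟩, ⟨y, -⟩⟩ := s
    have hpos : 0 < ρ ^ 2 * q' y + c := by nlinarith [hq'_nonneg y]
    have hq_scaled : q (√(ρ ^ 2 * q' y + c) • x) = ρ ^ 2 * q' y + c := by
      rw [hq_smul, show q x = 1 from hx, mul_one, Real.sq_sqrt hpos.le]
    ext
    · simp only [hq_scaled, smul_smul, inv_mul_cancel₀ (Real.sqrt_pos.mpr hpos).ne', one_smul]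
    · simp only [smul_smul, inv_mul_cancel₀ hρ.ne', one_smul]
  continuous_toFun := by
    refine .prodMk (.subtype_mk (.smul (.inv₀ (by fun_prop) fun p => ?_) (by fun_prop)) _)
      (.subtype_mk (by fun_prop) _)
    exact (Real.sqrt_pos.mpr (pos_of_mem_hyperboloidBand hq'_nonneg hc p.2)).ne'
  continuous_invFun := by
    fun_prop

end HyperboloidBand

noncomputable def sumSq {m : ℕ} (x : Fin m → ℝ) : ℝ := ∑ i, x i ^ 2

lemma continuous_sumSq (m : ℕ) : Continuous (sumSq (m := m)) := by
  unfold sumSq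
  fun_prop

lemma sumSq_smul {m : ℕ} (t : ℝ) (x : Fin m → ℝ) : sumSq (t • x) = t ^ 2 * sumSq x := by
  simp [sumSq, mul_pow, Finset.mul_sum]

lemma sumSq_nonneg {m : ℕ} (x : Fin m → ℝ) : 0 ≤ sumSq x := by
  unfold sumSq
  positivity

lemma Fin.sum_filter_lt_eq_sum_castAdd {M : Type*} [AddCommMonoid M] (m k : ℕ)
    (f : Fin (m + k) → M) :
    ∑ i ∈ Finset.univ.filter (fun i : Fin (m + k) => (i : ℕ) < m), f i
      = ∑ j : Fin m, f (Fin.castAdd k j) := by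
  simp [Finset.sum_filter, Fin.sum_univ_add]

lemma Fin.sum_filter_le_eq_sum_natAdd {M : Type*} [AddCommMonoid M] (m k : ℕ)
    (f : Fin (m + k) → M) :
    ∑ i ∈ Finset.univ.filter (fun i : Fin (m + k) => m ≤ (i : ℕ)), f i
      = ∑ j : Fin k, f (Fin.natAdd m j) := by
  simp [Finset.sum_filter, Fin.sum_univ_add, fun j : Fin m => not_le.mpr j.isLt]

lemma sumSq_appendHomeomorph_symm_fst {m k : ℕ} (x : Fin (m + k) → ℝ) :
    sumSq ((Fin.appendHomeomorph m k).symm x).1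
      = ∑ i ∈ Finset.univ.filter (fun i : Fin (m + k) => (i : ℕ) < m), x i ^ 2 := by
  simp [sumSq, Fin.sum_filter_lt_eq_sum_castAdd]

lemma sumSq_appendHomeomorph_symm_snd {m k : ℕ} (x : Fin (m + k) → ℝ) :
    sumSq ((Fin.appendHomeomorph m k).symm x).2
      = ∑ i ∈ Finset.univ.filter (fun i : Fin (m + k) => m ≤ (i : ℕ)), x i ^ 2 := by
  simp [sumSq, Fin.sum_filter_le_eq_sum_natAdd]

theorem stmt15_general (n lam : ℕ) (hlam2 : lam ≤ n - 1) :
    Nonempty (↥{x : Fin n → ℝ |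
        (∑ i ∈ Finset.univ.filter (fun i : Fin n => lam ≤ (i : ℕ)), (x i) ^ 2 ≤ 1/4) ∧
        - ∑ i ∈ Finset.univ.filter (fun i : Fin n => (i : ℕ) < lam), (x i) ^ 2
        + ∑ i ∈ Finset.univ.filter (fun i : Fin n => lam ≤ (i : ℕ)), (x i) ^ 2 = -(1/3)} ≃ₜ
      ↥(sphereSet lam) × ↥(diskSet (n - lam))) := by
  obtain ⟨k, rfl⟩ := Nat.exists_eq_add_of_le (show lam ≤ n by omega)
  rw [Nat.add_sub_cancel_left]
  have hband : ∀ x : Fin (lam + k) → ℝ,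
      ((∑ i ∈ Finset.univ.filter (fun i : Fin (lam + k) => lam ≤ (i : ℕ)), (x i) ^ 2 ≤ 1/4) ∧
        - ∑ i ∈ Finset.univ.filter (fun i : Fin (lam + k) => (i : ℕ) < lam), (x i) ^ 2
        + ∑ i ∈ Finset.univ.filter (fun i : Fin (lam + k) => lam ≤ (i : ℕ)), (x i) ^ 2
          = -(1/3)) ↔
      (Fin.appendHomeomorph lam k).symm x ∈ hyperboloidBand sumSq sumSq (1/2) (1/3) := by
    intro x
    rw [hyperboloidBand, Set.mem_ofPred_eq, sumSq_appendHomeomorph_symm_fst,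
      sumSq_appendHomeomorph_symm_snd]
    constructor <;> rintro ⟨hle, heq⟩ <;> exact ⟨by linarith, by linarith⟩
  exact ⟨((Fin.appendHomeomorph lam k).symm.subtype hband).trans
    (hyperboloidBandHomeomorph (continuous_sumSq lam) sumSq_smul (continuous_sumSq k)
      sumSq_smul sumSq_nonneg one_half_pos (by norm_num))⟩

/-- The set `d = {x : Σ_{i≥λ} x_i² ≤ 1/4, -Σ_{i<λ} x_i² + Σ_{i≥λ} x_i² = -1/3}`
is homeomorphic to `𝕊^{λ-1} × 𝔻^{n-λ}`. -/
theorem stmt15 (n lam : ℕ) (hn : 2 ≤ n) (hlam1 : 1 ≤ lam) (hlam2 : lam ≤ n - 1) :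
    Nonempty (↥{x : Fin n → ℝ |
        (∑ i ∈ Finset.univ.filter (fun i : Fin n => lam ≤ (i : ℕ)), (x i) ^ 2 ≤ 1/4) ∧
        - ∑ i ∈ Finset.univ.filter (fun i : Fin n => (i : ℕ) < lam), (x i) ^ 2
        + ∑ i ∈ Finset.univ.filter (fun i : Fin n => lam ≤ (i : ℕ)), (x i) ^ 2 = -(1/3)} ≃ₜ
      ↥(sphereSet lam) × ↥(diskSet (n - lam))) :=
  stmt15_general n lam hlam2
end

section
/- Let n ≥ 2 and λ ∈ {1,…,n−1}, and let a^t_λ be the model linear flow on ℝ^n. Let c = {x ∈ ℝ^n : Σ_{i=λ+1}^{n} x_i² = 1/4 and −Σ_{i=1}^{λ} x_i² + Σ_{i=λ+1}^{n} x_i² = −1/3}. Then c is homeomorphic to 𝕊^{λ−1} × 𝕊^{n−λ−1}, and the saturation R = {a^t_λ(x) : x ∈ c, t ∈ ℝ}, with the subspace topology from ℝ^n, is homeomorphic to 𝕊^{λ−1} × 𝕊^{n−λ−1} × ℝ. -/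
open Filter Topology Set

noncomputable def Asum (n lam : ℕ) (x : Fin n → ℝ) : ℝ :=
  ∑ i ∈ Finset.univ.filter (fun i : Fin n => (i : ℕ) < lam), (x i) ^ 2

noncomputable def Bsum (n lam : ℕ) (x : Fin n → ℝ) : ℝ :=
  ∑ i ∈ Finset.univ.filter (fun i : Fin n => lam ≤ (i : ℕ)), (x i) ^ 2

def cSet (n lam : ℕ) : Set (Fin n → ℝ) :=
  {x | Bsum n lam x = 1/4 ∧ Asum n lam x = 7/12}

def RSet (n lam : ℕ) : Set (Fin n → ℝ) :=
  {y | ∃ x ∈ cSet n lam, ∃ t : ℝ, modelFlow n lam t x = y}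

def embB (n lam : ℕ) (hln : lam ≤ n) (j : Fin (n - lam)) : Fin n :=
  ⟨lam + j, by have := j.isLt; omega⟩

lemma modelFlow_add (n lam : ℕ) (s t : ℝ) (x : Fin n → ℝ) :
    modelFlow n lam s (modelFlow n lam t x) = modelFlow n lam (s + t) x := by
  funext i
  simp only [modelFlow]
  split_ifs with h
  · rw [← mul_assoc, ← Real.rpow_add (by norm_num : (0:ℝ) < 2)]
  · rw [← mul_assoc, ← Real.rpow_add (by norm_num : (0:ℝ) < 2), neg_add]

lemma modelFlow_zero (n lam : ℕ) (x : Fin n → ℝ) : modelFlow n lam 0 x = x := by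
  funext i; simp [modelFlow]

lemma Asum_flow (n lam : ℕ) (t : ℝ) (x : Fin n → ℝ) :
    Asum n lam (modelFlow n lam t x) = ((2:ℝ) ^ t) ^ 2 * Asum n lam x := by
  unfold Asum modelFlow
  rw [Finset.mul_sum]
  refine Finset.sum_congr rfl fun i hi => ?_
  simp only [Finset.mem_filter] at hi
  rw [if_pos hi.2]; ring

lemma Bsum_flow (n lam : ℕ) (t : ℝ) (x : Fin n → ℝ) :
    Bsum n lam (modelFlow n lam t x) = ((2:ℝ) ^ (-t)) ^ 2 * Bsum n lam x := by
  unfold Bsum modelFlow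
  rw [Finset.mul_sum]
  refine Finset.sum_congr rfl fun i hi => ?_
  simp only [Finset.mem_filter] at hi
  rw [if_neg (not_lt.mpr hi.2)]; ring

lemma sq_rpow (u : ℝ) : ((2:ℝ) ^ u) ^ 2 = (2:ℝ) ^ (u * 2) := by
  rw [← Real.rpow_natCast ((2:ℝ) ^ u) 2, ← Real.rpow_mul (by norm_num : (0:ℝ) ≤ 2)]
  norm_num

def eA (n lam : ℕ) (hln : lam ≤ n) : {i : Fin n // (i : ℕ) < lam} ≃ Fin lam where
  toFun i := ⟨i.1.1, i.2⟩
  invFun j := ⟨Fin.castLE hln j, j.2⟩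
  left_inv i := Subtype.ext (Fin.ext rfl)
  right_inv j := rfl

def eB (n lam : ℕ) (hln : lam ≤ n) : {i : Fin n // lam ≤ (i : ℕ)} ≃ Fin (n - lam) where
  toFun i := ⟨i.1.1 - lam, by have h1 := i.1.isLt; have h2 := i.2; omega⟩
  invFun j := ⟨embB n lam hln j, by simp [embB]⟩
  left_inv i := Subtype.ext (Fin.ext (by have := i.2; simp only [embB]; omega))
  right_inv j := Fin.ext (by simp [embB])

lemma Asum_eq (n lam : ℕ) (hln : lam ≤ n) (x : Fin n → ℝ) :
    Asum n lam x = ∑ j : Fin lam, (x (Fin.castLE hln j)) ^ 2 := by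
  unfold Asum
  rw [Finset.sum_subtype (p := fun i : Fin n => (i : ℕ) < lam) _ (by simp) (fun i => (x i) ^ 2)]
  exact Fintype.sum_equiv (eA n lam hln) _ _ (fun i => rfl)

lemma Bsum_eq (n lam : ℕ) (hln : lam ≤ n) (x : Fin n → ℝ) :
    Bsum n lam x = ∑ j : Fin (n - lam), (x (embB n lam hln j)) ^ 2 := by
  unfold Bsum
  rw [Finset.sum_subtype (p := fun i : Fin n => lam ≤ (i : ℕ)) _ (by simp) (fun i => (x i) ^ 2)]
  exact Fintype.sum_equiv (eB n lam hln) _ _ (fun i => by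
    congr 1; exact congrArg x (Fin.ext (by have := i.2; simp [eB, embB]; omega)))

noncomputable def cHomeo (n lam : ℕ) (hln : lam ≤ n) :
    ↥(cSet n lam) ≃ₜ ↥(sphereSet lam) × ↥(sphereSet (n - lam)) where
  toFun x :=
    (⟨fun j => x.1 (Fin.castLE hln j) / Real.sqrt (7/12), by
        show ∑ j, _ ^ 2 = 1
        have hx := x.2.2
        rw [Asum_eq n lam hln] at hx
        simp only [div_pow, Real.sq_sqrt (by norm_num : (0:ℝ) ≤ 7/12)]
        rw [← Finset.sum_div, hx]
        norm_num⟩,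
     ⟨fun j => 2 * x.1 (embB n lam hln j), by
        show ∑ j, _ ^ 2 = 1
        have hx := x.2.1
        rw [Bsum_eq n lam hln] at hx
        simp only [mul_pow]
        rw [← Finset.mul_sum, hx]
        norm_num⟩)
  invFun p :=
    ⟨fun i => if h : (i : ℕ) < lam then Real.sqrt (7/12) * p.1.1 ⟨i, h⟩
              else p.2.1 ⟨(i : ℕ) - lam, by have := i.isLt; omega⟩ / 2, by
      constructor
      · rw [Bsum_eq n lam hln]
        have h1 : ∀ j : Fin (n - lam),
            (if h : ((embB n lam hln j : Fin n) : ℕ) < lam then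
                Real.sqrt (7/12) * p.1.1 ⟨(embB n lam hln j : Fin n), h⟩
              else p.2.1 ⟨((embB n lam hln j : Fin n) : ℕ) - lam,
                by have := (embB n lam hln j).isLt; omega⟩ / 2)
            = p.2.1 j / 2 := by
          intro j
          rw [dif_neg (by simp [embB])]
          congr 1
          exact congrArg p.2.1 (Fin.ext (by simp [embB]))
        have h2 : ∑ i, (p.2.1 i) ^ 2 = 1 := p.2.2
        simp only [h1, div_pow, ← Finset.sum_div, h2]
        norm_num
      · rw [Asum_eq n lam hln]
        have h1 : ∀ j : Fin lam,
            (if h : ((Fin.castLE hln j : Fin n) : ℕ) < lam then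
                Real.sqrt (7/12) * p.1.1 ⟨(Fin.castLE hln j : Fin n), h⟩
              else p.2.1 ⟨((Fin.castLE hln j : Fin n) : ℕ) - lam,
                by have := (Fin.castLE hln j).isLt; omega⟩ / 2)
            = Real.sqrt (7/12) * p.1.1 j := by
          intro j
          rw [dif_pos (show ((Fin.castLE hln j : Fin n) : ℕ) < lam from j.2)]
          rfl
        have h2 : ∑ i, (p.1.1 i) ^ 2 = 1 := p.1.2
        simp only [h1, mul_pow, ← Finset.mul_sum, h2,
          Real.sq_sqrt (by norm_num : (0:ℝ) ≤ 7/12)]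
        norm_num⟩
  left_inv x := by
    apply Subtype.ext
    funext i
    by_cases h : (i : ℕ) < lam
    · simp only [dif_pos h]
      rw [mul_div_cancel₀]
      · exact congrArg x.1 (Fin.ext rfl)
      · exact Real.sqrt_ne_zero'.mpr (by norm_num)
    · simp only [dif_neg h]
      rw [mul_comm, mul_div_assoc]
      norm_num
      exact congrArg x.1 (Fin.ext (by simp [embB]; omega))
  right_inv p := by
    ext j
    · show (if h : ((Fin.castLE hln j : Fin n) : ℕ) < lam then _ else _) / Real.sqrt (7/12) = _
      rw [dif_pos (show ((Fin.castLE hln j : Fin n) : ℕ) < lam from j.2), mul_comm, mul_div_assoc, div_self (Real.sqrt_ne_zero'.mpr (by norm_num)),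
        mul_one]
      rfl
    · show 2 * (if h : ((embB n lam hln j : Fin n) : ℕ) < lam then _ else _) = _
      rw [dif_neg (by simp [embB])]
      rw [mul_div_cancel₀ _ (by norm_num : (2:ℝ) ≠ 0)]
      exact congrArg p.2.1 (Fin.ext (by simp [embB]))
  continuous_toFun := by
    apply Continuous.prodMk
    · apply Continuous.subtype_mk
      apply continuous_pi
      intro j
      exact ((continuous_apply _).comp continuous_subtype_val).div_const _
    · apply Continuous.subtype_mk
      apply continuous_pi
      intro j
      exact continuous_const.mul ((continuous_apply _).comp continuous_subtype_val)
  continuous_invFun := by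
    apply Continuous.subtype_mk
    apply continuous_pi
    intro i
    by_cases h : (i : ℕ) < lam
    · simp only [dif_pos h]
      exact continuous_const.mul
        ((continuous_apply _).comp (continuous_subtype_val.comp continuous_fst))
    · simp only [dif_neg h]
      exact (((continuous_apply _).comp (continuous_subtype_val.comp continuous_snd)).div_const _)

noncomputable def tau (n lam : ℕ) (y : Fin n → ℝ) : ℝ :=
  -(Real.logb 2 (4 * Bsum n lam y)) / 2

lemma tau_flow (n lam : ℕ) (t : ℝ) (x : Fin n → ℝ) (hx : Bsum n lam x = 1/4) :
    tau n lam (modelFlow n lam t x) = t := by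
  unfold tau
  rw [Bsum_flow, hx, sq_rpow]
  have h4 : (4:ℝ) * ((2:ℝ) ^ (-t*2) * (1/4)) = (2:ℝ) ^ (-t*2) := by ring
  rw [h4, Real.logb_rpow (by norm_num) (by norm_num)]
  ring

lemma Bsum_pos (n lam : ℕ) (y : Fin n → ℝ) (hy : y ∈ RSet n lam) : 0 < Bsum n lam y := by
  obtain ⟨x, hx, t, rfl⟩ := hy
  rw [Bsum_flow, hx.1]
  positivity

lemma continuous_Bsum (n lam : ℕ) : Continuous (Bsum n lam) := by
  unfold Bsum
  exact continuous_finset_sum _ (fun i _ => (continuous_apply i).pow 2)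

lemma continuous_tau (n lam : ℕ) : Continuous fun y : ↥(RSet n lam) => tau n lam y.1 := by
  unfold tau
  apply Continuous.div_const
  apply Continuous.neg
  simp only [Real.logb]
  apply Continuous.div_const
  rw [continuous_iff_continuousAt]
  intro y
  have hB : (0:ℝ) < 4 * Bsum n lam y.1 := by
    have := Bsum_pos n lam y.1 y.2; linarith
  have hcont : Continuous fun y : ↥(RSet n lam) => 4 * Bsum n lam y.1 :=
    continuous_const.mul ((continuous_Bsum n lam).comp continuous_subtype_val)
  exact ContinuousAt.comp (g := Real.log)
    (Real.continuousAt_log (x := 4 * Bsum n lam y.1) (ne_of_gt hB)) hcont.continuousAt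

lemma continuous_modelFlow (n lam : ℕ) {α : Type*} [TopologicalSpace α]
    {g : α → ℝ} {f : α → Fin n → ℝ} (hg : Continuous g) (hf : Continuous f) :
    Continuous fun a => modelFlow n lam (g a) (f a) := by
  unfold modelFlow
  apply continuous_pi
  intro i
  by_cases h : (i : ℕ) < lam
  · simp only [if_pos h]
    exact (continuous_const.rpow hg (fun a => Or.inl (by norm_num))).mul
      ((continuous_apply i).comp hf)
  · simp only [if_neg h]
    exact (continuous_const.rpow hg.neg (fun a => Or.inl (by norm_num))).mul
      ((continuous_apply i).comp hf)

noncomputable def rHomeo (n lam : ℕ) : ↥(RSet n lam) ≃ₜ ↥(cSet n lam) × ℝ where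
  toFun y :=
    (⟨modelFlow n lam (-(tau n lam y.1)) y.1, by
        obtain ⟨x, hx, t, ht⟩ := y.2
        rw [← ht, tau_flow n lam t x hx.1, modelFlow_add, neg_add_cancel, modelFlow_zero]
        exact hx⟩,
     tau n lam y.1)
  invFun p := ⟨modelFlow n lam p.2 p.1.1, p.1.1, p.1.2, p.2, rfl⟩
  left_inv y := by
    apply Subtype.ext
    show modelFlow n lam (tau n lam y.1) (modelFlow n lam (-(tau n lam y.1)) y.1) = y.1
    rw [modelFlow_add, add_neg_cancel, modelFlow_zero]
  right_inv p := by
    have hτ : tau n lam (modelFlow n lam p.2 p.1.1) = p.2 := tau_flow n lam p.2 p.1.1 p.1.2.1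
    refine Prod.ext (Subtype.ext ?_) hτ
    show modelFlow n lam (-(tau n lam (modelFlow n lam p.2 p.1.1)))
      (modelFlow n lam p.2 p.1.1) = p.1.1
    rw [hτ, modelFlow_add, neg_add_cancel, modelFlow_zero]
  continuous_toFun := by
    apply Continuous.prodMk
    · apply Continuous.subtype_mk
      exact continuous_modelFlow n lam (continuous_tau n lam).neg continuous_subtype_val
    · exact continuous_tau n lam
  continuous_invFun := by
    apply Continuous.subtype_mk
    exact continuous_modelFlow n lam continuous_snd (continuous_subtype_val.comp continuous_fst)


/-- The set `c = {x : Σ_{i≥λ} x_i² = 1/4, -Σ_{i<λ} x_i² + Σ_{i≥λ} x_i² = -1/3}`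
is homeomorphic to `𝕊^{λ-1} × 𝕊^{n-λ-1}`, and its saturation under the model linear flow is
homeomorphic to `𝕊^{λ-1} × 𝕊^{n-λ-1} × ℝ`. -/
theorem stmt16 (n lam : ℕ) (hn : 2 ≤ n) (hlam1 : 1 ≤ lam) (hlam2 : lam ≤ n - 1) :
    let c : Set (Fin n → ℝ) := {x |
      (∑ i ∈ Finset.univ.filter (fun i : Fin n => lam ≤ (i : ℕ)), (x i) ^ 2 = 1/4) ∧
      - ∑ i ∈ Finset.univ.filter (fun i : Fin n => (i : ℕ) < lam), (x i) ^ 2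
      + ∑ i ∈ Finset.univ.filter (fun i : Fin n => lam ≤ (i : ℕ)), (x i) ^ 2 = -(1/3)}
    Nonempty (↥c ≃ₜ ↥(sphereSet lam) × ↥(sphereSet (n - lam))) ∧
    Nonempty (↥{y : Fin n → ℝ | ∃ x ∈ c, ∃ t : ℝ, modelFlow n lam t x = y} ≃ₜ
      ↥(sphereSet lam) × ↥(sphereSet (n - lam)) × ℝ) := by
  intro c
  have hln : lam ≤ n := le_trans hlam2 (Nat.sub_le n 1)
  have hc : c = cSet n lam := by
    ext x
    constructor
    · intro h
      have h1 := h.1; have h2 := h.2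
      refine ⟨h.1, ?_⟩
      show Asum n lam x = 7/12
      unfold Asum
      linarith
    · intro h
      have h1 : Bsum n lam x = 1/4 := h.1
      have h2 : Asum n lam x = 7/12 := h.2
      unfold Bsum at h1
      unfold Asum at h2
      exact ⟨h1, by linarith⟩
  rw [hc]
  refine ⟨⟨cHomeo n lam hln⟩, ⟨?_⟩⟩
  exact (rHomeo n lam).trans
    (((cHomeo n lam hln).prodCongr (Homeomorph.refl ℝ)).trans
      (Homeomorph.prodAssoc _ _ _))
end

section
/- Let M be a closed topological n-manifold and let f be a topological flow on M whose chain recurrent set R_f is finite and consists of topologically hyperbolic fixed points. Then the Smale relation p ≺ q ⟺ W^s_p ∩ W^u_q ≠ ∅ (p ≠ q) extends to a total order: there exists an enumeration p_1, …, p_k of the fixed points of f such that whenever W^s_{p_i} ∩ W^u_{p_j} ≠ ∅ and i ≠ j, one has i < j. -/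
open Filter Topology Set

/-! A point of `W^s_p` chains forward to `p`, and a fixed point `q` chains to every point of
`W^u_q`, so `p ≺ q` yields `ε`-chains from `q` to `p` for every `ε`. Along a cycle of `≺` through
`p ≺ q`, these chains close up at a point `x ∈ W^s_p ∩ W^u_q`, so `x` is chain recurrent, hence a
fixed point, and then `p = x = q`. Thus `≺` is acyclic on the finite set `R_f`, and any linear
extension of its transitive closure enumerates `R_f` as required. -/

def ChainReachable {M : Type*} [MetricSpace M] (f : ℝ → M → M) (x y : M) : Prop :=
  ∀ ε > 0, ∃ T > 0, IsEpsChain f ε T x y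

def SmaleRel {M : Type*} [TopologicalSpace M] (f : ℝ → M → M) (p q : M) : Prop :=
  (stableSet f p ∩ unstableSet f q).Nonempty ∧ p ≠ q

theorem Finset.sum_Icc_ite_le_sub {β : Type*} [AddCommMonoid β] (m₁ m₂ : ℕ) (a b : ℕ → β) :
    ∑ i ∈ Finset.Icc 1 (m₁ + m₂), (if i ≤ m₁ then a i else b (i - m₁)) =
      ∑ i ∈ Finset.Icc 1 m₁, a i + ∑ i ∈ Finset.Icc 1 m₂, b i := by
  induction m₂ with
  | zero =>
    rw [Nat.add_zero, Finset.Icc_eq_empty_of_lt zero_lt_one, Finset.sum_empty, add_zero]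
    exact Finset.sum_congr rfl fun i hi => if_pos (Finset.mem_Icc.mp hi).2
  | succ m ih =>
    rw [← add_assoc, Finset.sum_Icc_succ_top (Nat.le_add_left 1 _),
      Finset.sum_Icc_succ_top (Nat.le_add_left 1 _), ih, if_neg (by omega),
      show m₁ + m + 1 - m₁ = m + 1 by omega, add_assoc]

theorem exists_equiv_fin_lt_of_transGen_irrefl {α : Type*} [Fintype α] (r : α → α → Prop)
    (hr : ∀ a, ¬ Relation.TransGen r a a) :
    ∃ e : Fin (Fintype.card α) ≃ α, ∀ i j, r (e i) (e j) → i < j := by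
  have : IsStrictOrder α (Relation.TransGen r) :=
    { irrefl := hr, trans := fun _ _ _ => Relation.TransGen.trans }
  let _ : PartialOrder α := partialOrderOfSO (Relation.TransGen r)
  have hmono : ∀ a b, r a b → (toLinearExtension a : LinearExtension α) < toLinearExtension b :=
    fun a b h =>
      have hab : a < b := Relation.TransGen.single h
      (toLinearExtension.monotone hab.le).lt_of_ne hab.ne
  let _ : Fintype (LinearExtension α) := inferInstanceAs (Fintype α)
  let e := monoEquivOfFin (LinearExtension α) rfl
  exact ⟨e.toEquiv, fun i j hij => e.lt_iff_lt.mp (hmono _ _ hij)⟩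

section ChainRecurrence

variable {M : Type*} [MetricSpace M] {f : ℝ → M → M} {ε T₁ T₂ : ℝ} {x y z : M}

theorem IsEpsChain.single {t : ℝ} (ht : 1 ≤ t) (h : dist (f t x) y < ε) :
    IsEpsChain f ε t x y := by
  refine ⟨1, fun i => if i = 0 then x else y, fun _ => t, one_pos, rfl, rfl, ?_, by simp⟩
  intro i hi
  obtain rfl : i = 1 := by simpa using hi
  exact ⟨ht, h⟩

theorem IsEpsChain.trans (h₁ : IsEpsChain f ε T₁ x y) (h₂ : IsEpsChain f ε T₂ y z) :
    IsEpsChain f ε (T₁ + T₂) x z := by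
  obtain ⟨m₁, xs₁, ts₁, hm₁, hx₁, hy₁, hstep₁, hsum₁⟩ := h₁
  obtain ⟨m₂, xs₂, ts₂, -, hx₂, hy₂, hstep₂, hsum₂⟩ := h₂
  set xs : ℕ → M := fun i => if i ≤ m₁ then xs₁ i else xs₂ (i - m₁)
  have hxs : ∀ i, m₁ ≤ i → xs i = xs₂ (i - m₁) := by
    intro i hi
    rcases hi.eq_or_lt with rfl | hi
    · simp [xs, hy₁, hx₂]
    · exact if_neg hi.not_ge
  refine ⟨m₁ + m₂, xs, fun i => if i ≤ m₁ then ts₁ i else ts₂ (i - m₁), by omega,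
    by simp [xs, hx₁], by rw [hxs _ (by omega), Nat.add_sub_cancel_left, hy₂], ?_,
    by rw [Finset.sum_Icc_ite_le_sub, hsum₁, hsum₂]⟩
  intro i hi
  obtain ⟨hi₁, hi₂⟩ := Finset.mem_Icc.mp hi
  by_cases h : i ≤ m₁
  · simp only [if_pos h, xs, if_pos (show i - 1 ≤ m₁ by omega)]
    exact hstep₁ i (Finset.mem_Icc.mpr ⟨hi₁, h⟩)
  · simp only [if_neg h]
    rw [hxs i (by omega), hxs (i - 1) (by omega), show i - 1 - m₁ = i - m₁ - 1 by omega]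
    exact hstep₂ (i - m₁) (Finset.mem_Icc.mpr ⟨by omega, by omega⟩)

theorem ChainReachable.trans (h₁ : ChainReachable f x y) (h₂ : ChainReachable f y z) :
    ChainReachable f x z := fun ε hε => by
  obtain ⟨T₁, hT₁, hc₁⟩ := h₁ ε hε
  obtain ⟨T₂, hT₂, hc₂⟩ := h₂ ε hε
  exact ⟨T₁ + T₂, add_pos hT₁ hT₂, hc₁.trans hc₂⟩

theorem chainReachable_of_mem_stableSet {p : M} (hx : x ∈ stableSet f p) :
    ChainReachable f x p := fun ε hε => by
  obtain ⟨N, hN⟩ := Metric.tendsto_atTop.mp hx ε hε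
  exact ⟨max N 1, by positivity, .single (le_max_right N 1) (hN _ (le_max_left N 1))⟩

theorem chainReachable_of_mem_unstableSet (hf_zero : ∀ x, f 0 x = x)
    (hf_add : ∀ s t : ℝ, ∀ x, f t (f s x) = f (t + s) x) {q : M} (hq : ∀ t, f t q = q)
    (hx : x ∈ unstableSet f q) : ChainReachable f q x := fun ε hε => by
  obtain ⟨N, hN⟩ := Metric.tendsto_atTop.mp hx ε hε
  set T := max N 1
  have hjump : IsEpsChain f ε 1 q (f (-T) x) :=
    .single le_rfl (by rw [hq, dist_comm]; exact hN T (le_max_left N 1))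
  have hflow : IsEpsChain f ε T (f (-T) x) x :=
    .single (le_max_right N 1) (by rwa [hf_add, add_neg_cancel, hf_zero, dist_self])
  exact ⟨1 + T, by positivity, hjump.trans hflow⟩

end ChainRecurrence

section FixedPoints

variable {M : Type*} [TopologicalSpace M] {f : ℝ → M → M} {x p : M}

theorem mem_stableSet_self (hx : ∀ t, f t x = x) : x ∈ stableSet f x := by
  simp only [stableSet, mem_ofPred_eq, hx]
  exact tendsto_const_nhds

theorem eq_of_mem_stableSet [T2Space M] (hx : ∀ t, f t x = x) (h : x ∈ stableSet f p) : x = p :=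
  tendsto_nhds_unique (by simp only [hx]; exact tendsto_const_nhds) h

theorem eq_of_mem_unstableSet [T2Space M] (hx : ∀ t, f t x = x) (h : x ∈ unstableSet f p) :
    x = p :=
  tendsto_nhds_unique (by simp only [hx]; exact tendsto_const_nhds) h

end FixedPoints

section Smale

variable {M : Type*} [MetricSpace M] {f : ℝ → M → M} {R : Set M}

theorem chainReachable_of_reflTransGen_smaleRel (hf_zero : ∀ x, f 0 x = x)
    (hf_add : ∀ s t : ℝ, ∀ x, f t (f s x) = f (t + s) x) (hfix : ∀ p ∈ R, ∀ t, f t p = p)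
    {a b : R} (h : Relation.ReflTransGen (fun a b : R => SmaleRel f a b) a b) :
    ChainReachable f b a := by
  induction h with
  | refl => exact chainReachable_of_mem_stableSet (mem_stableSet_self (hfix a a.2))
  | @tail b c _ hbc ih =>
    obtain ⟨⟨x, hxs, hxu⟩, -⟩ := hbc
    exact ((chainReachable_of_mem_unstableSet hf_zero hf_add (hfix c c.2) hxu).trans
      (chainReachable_of_mem_stableSet hxs)).trans ih

theorem smaleRel_transGen_irrefl (hf_zero : ∀ x, f 0 x = x)
    (hf_add : ∀ s t : ℝ, ∀ x, f t (f s x) = f (t + s) x)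
    (hR : ∀ x, IsChainRecurrent f x → x ∈ R) (hfix : ∀ p ∈ R, ∀ t, f t p = p) (a : R) :
    ¬ Relation.TransGen (fun a b : R => SmaleRel f a b) a a := by
  intro h
  obtain ⟨c, ⟨⟨x, hxs, hxu⟩, hac⟩, hca⟩ := Relation.TransGen.head'_iff.mp h
  have hx : IsChainRecurrent f x :=
    ((chainReachable_of_mem_stableSet hxs).trans
      (chainReachable_of_reflTransGen_smaleRel hf_zero hf_add hfix hca)).trans
      (chainReachable_of_mem_unstableSet hf_zero hf_add (hfix c c.2) hxu)
  have hxfix := hfix x (hR x hx)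
  exact hac ((eq_of_mem_stableSet hxfix hxs).symm.trans (eq_of_mem_unstableSet hxfix hxu))

end Smale

theorem stmt18_general {M : Type*} [MetricSpace M] (n : ℕ)
    (f : ℝ → M → M)
    (hf_zero : ∀ x, f 0 x = x)
    (hf_add : ∀ s t : ℝ, ∀ x, f t (f s x) = f (t + s) x)
    (R : Set M) (hR : R = {x | IsChainRecurrent f x}) (hRfin : R.Finite)
    (hRhyp : ∀ p ∈ R, ∃ lam : ℕ, IsTopHyperbolicFixedPt n f p lam) :
    ∃ (k : ℕ) (p : Fin k → M), Function.Injective p ∧ Set.range p = R ∧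
      ∀ i j : Fin k, (stableSet f (p i) ∩ unstableSet f (p j)).Nonempty → i ≠ j → i < j := by
  have hfix : ∀ p ∈ R, ∀ t, f t p = p := fun p hp => (hRhyp p hp).choose_spec.2.1
  have : Fintype R := hRfin.fintype
  obtain ⟨e, he⟩ := exists_equiv_fin_lt_of_transGen_irrefl _
    (smaleRel_transGen_irrefl hf_zero hf_add (fun x hx => hR ▸ hx) hfix)
  refine ⟨_, Subtype.val ∘ e, Subtype.val_injective.comp e.injective, ?_,
    fun i j hij hne => he i j ⟨hij, fun h => hne (e.injective (Subtype.ext h))⟩⟩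
  rw [range_comp, e.range_eq_univ, image_univ, Subtype.range_coe]

/-- The Smale relation `p ≺ q ⟺ W^s_p ∩ W^u_q ≠ ∅` on the finite
hyperbolic chain recurrent set extends to a total order: the fixed points can be
enumerated `p_1, …, p_k` so that `W^s_{p_i} ∩ W^u_{p_j} ≠ ∅` and `i ≠ j` imply `i < j`. -/
theorem stmt18 {M : Type*} [MetricSpace M] [CompactSpace M] (n : ℕ)
    (hM : LocallyEuclidean n M)
    (f : ℝ → M → M)
    (hf_cont : Continuous fun q : ℝ × M => f q.1 q.2)
    (hf_zero : ∀ x, f 0 x = x)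
    (hf_add : ∀ s t : ℝ, ∀ x, f t (f s x) = f (t + s) x)
    (R : Set M) (hR : R = {x | IsChainRecurrent f x}) (hRfin : R.Finite)
    (hRhyp : ∀ p ∈ R, ∃ lam : ℕ, IsTopHyperbolicFixedPt n f p lam) :
    ∃ (k : ℕ) (p : Fin k → M), Function.Injective p ∧ Set.range p = R ∧
      ∀ i j : Fin k, (stableSet f (p i) ∩ unstableSet f (p j)).Nonempty → i ≠ j → i < j :=
  stmt18_general n f hf_zero hf_add R hR hRfin hRhyp
end
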